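/- arXiv:2304.04651 — 6 statements merged into one kernel-verified Lean document; each statement's English description precedes it below -/
import Mathlib

section
/- An ideal independent family $\mathcal{A}$ is maximal (with respect to inclusion among ideal independent families) if and only if every infinite set $X \subseteq \omega$ either lies in the ideal generated by $\mathcal{A}$ (i.e., $X \subseteq^* \bigcup \mathcal{F}$ for some finite $\mathcal{F} \subseteq \mathcal{A}$) or belongs to $\mathcal{F}(\mathcal{A}, A)$ for some $A \in \mathcal{A}$. -/
/-- A family of infinite subsets of ω is *ideal independent* if no member is
almost covered by finitely many of the others. -/
def IdealIndependent (A : Set (Set ℕ)) : Prop :=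
  (∀ X ∈ A, X.Infinite) ∧
  ∀ X ∈ A, ∀ F : Finset (Set ℕ), ↑F ⊆ A \ {X} → (X \ ⋃ Y ∈ F, Y).Infinite

/-- Maximal ideal independent family: no ideal independent family properly contains it. -/
def MaximalIdealIndependent (A : Set (Set ℕ)) : Prop :=
  IdealIndependent A ∧ ∀ B : Set (Set ℕ), IdealIndependent B → A ⊆ B → B = A

/-- Generating sets of the complemented filter `𝓕(A, X)`. -/
def genSets (A : Set (Set ℕ)) (X : Set ℕ) : Set (Set ℕ) :=
  {S | ∃ F : Finset (Set ℕ), ↑F ⊆ A \ {X} ∧ S = X \ ⋃ Y ∈ F, Y}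

/-- The complemented filter `𝓕(A, X)` generated by the sets `X \ ⋃ 𝓑`,
`𝓑` a finite subset of `A \ {X}`. -/
def complFilter (A : Set (Set ℕ)) (X : Set ℕ) : Filter ℕ :=
  Filter.generate (genSets A X)

/-- The ideal `𝓙(A)` generated by the pairwise intersections of distinct members
of `A` together with the finite sets. -/
def idealJ (A : Set (Set ℕ)) : Set (Set ℕ) :=
  {X | ∃ F : Finset (Set ℕ × Set ℕ),
    (∀ p ∈ F, p.1 ∈ A ∧ p.2 ∈ A ∧ p.1 ≠ p.2) ∧
    (X \ ⋃ p ∈ F, p.1 ∩ p.2).Finite}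

/-!
If `A` satisfies the dichotomy and `X` is a new member of a larger ideal independent family,
then either `X` is almost covered by finitely many members of `A`, or `X ⊇ B \ ⋃ 𝓑` for some
`B ∈ A`, in which case `B` is covered by `X` together with `𝓑`.

Conversely, let `A` be maximal and let `X` violate the dichotomy. For every finite `𝓖 ⊆ A`,
maximality applied to `X \ ⋃ 𝓖` yields a member `Z ∉ 𝓖` almost covered by `X` together with
finitely many other members, so there are infinitely many such `Z`. As `X ∉ 𝓕(A, Z)`, the finitely
many points of `Z` left uncovered cannot all lie in other members of `A`: each such `Z` has a
private point. One private point per such `Z` gives an infinite set meeting every member of `A`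
in at most one point, and it could be added to `A`.
-/

lemma mem_complFilter {A : Set (Set ℕ)} {C X : Set ℕ} :
    X ∈ complFilter A C ↔ ∃ F : Finset (Set ℕ), ↑F ⊆ A \ {C} ∧ C \ ⋃ Y ∈ F, Y ⊆ X := by
  refine ⟨fun h => ?_, fun ⟨F, hF, hsub⟩ => Filter.mem_of_superset (.basic ⟨F, hF, rfl⟩) hsub⟩
  induction h with
  | basic hs =>
    obtain ⟨F, hF, rfl⟩ := hs
    exact ⟨F, hF, subset_rfl⟩
  | univ => exact ⟨∅, by simp, Set.subset_univ _⟩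
  | superset _ hst ih =>
    obtain ⟨F, hF, hsub⟩ := ih
    exact ⟨F, hF, hsub.trans hst⟩
  | inter _ _ ihs iht =>
    obtain ⟨F, hF, hFs⟩ := ihs
    obtain ⟨G, hG, hGt⟩ := iht
    refine ⟨F ∪ G, by simpa using Set.union_subset hF hG, ?_⟩
    rw [Finset.set_biUnion_union, ← Set.sdiff_sdiff]
    exact Set.subset_inter (Set.sdiff_subset.trans hFs)
      ((Set.sdiff_subset_sdiff_left Set.sdiff_subset).trans hGt)

/-- `A ∪ {X}` fails to be ideal independent at `Z ∈ A`. -/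
def AlmostCoveredWith (A : Set (Set ℕ)) (X Z : Set ℕ) : Prop :=
  ∃ F : Finset (Set ℕ), ↑F ⊆ A \ {Z} ∧ (Z \ (X ∪ ⋃ Y ∈ F, Y)).Finite

def HasPrivatePoint (A : Set (Set ℕ)) (B : Set ℕ) : Prop :=
  ∃ n ∈ B, ∀ C ∈ A, C ≠ B → n ∉ C

lemma IdealIndependent.insert_of_not_almostCoveredWith {A : Set (Set ℕ)} {Y : Set ℕ}
    (hA : IdealIndependent A)
    (hY : ∀ F : Finset (Set ℕ), ↑F ⊆ A → (Y \ ⋃ Z ∈ F, Z).Infinite)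
    (hcov : ∀ Z ∈ A, ¬ AlmostCoveredWith A Y Z) : IdealIndependent (insert Y A) := by
  refine ⟨fun Z hZ => ?_, fun Z hZ F hF => ?_⟩
  · rcases hZ with rfl | hZ
    · simpa using hY ∅ (by simp)
    · exact hA.1 Z hZ
  rcases hZ with rfl | hZ
  · refine hY F fun W hW => ?_
    obtain ⟨hW, hWZ⟩ := hF hW
    exact hW.resolve_left hWZ
  · have hFY : ↑(F.erase Y) ⊆ A \ {Z} := fun W hW => by
      obtain ⟨hWY, hWF⟩ := Finset.mem_erase.1 hW
      obtain ⟨hW, hWZ⟩ := hF hWF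
      exact ⟨hW.resolve_left hWY, hWZ⟩
    have hsub : ⋃ W ∈ F, W ⊆ Y ∪ ⋃ W ∈ F.erase Y, W :=
      (Set.biUnion_subset_biUnion_left (Finset.insert_erase_subset Y F)).trans
        (Finset.set_biUnion_insert Y (F.erase Y) fun W => W).subset
    exact (Set.not_finite.1 fun h => hcov Z hZ ⟨_, hFY, h⟩).mono (Set.sdiff_subset_sdiff_right hsub)

lemma MaximalIdealIndependent.exists_almostCoveredWith {A : Set (Set ℕ)} {Y : Set ℕ}
    (hmax : MaximalIdealIndependent A) (hYA : Y ∉ A)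
    (hY : ∀ F : Finset (Set ℕ), ↑F ⊆ A → (Y \ ⋃ Z ∈ F, Z).Infinite) :
    ∃ Z ∈ A, AlmostCoveredWith A Y Z := by
  by_contra! hcov
  have hYA' := hmax.2 _ (hmax.1.insert_of_not_almostCoveredWith hY hcov) (Set.subset_insert Y A)
  exact hYA (hYA' ▸ Set.mem_insert Y A)

lemma MaximalIdealIndependent.exists_infinite_inter {A : Set (Set ℕ)} {S : Set ℕ}
    (hmax : MaximalIdealIndependent A) (hS : S.Infinite) : ∃ C ∈ A, (S ∩ C).Infinite := by
  by_contra! hfin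
  have hSA : S ∉ A := fun h => hS (by simpa using hfin S h)
  have hS' : ∀ F : Finset (Set ℕ), ↑F ⊆ A → (S \ ⋃ C ∈ F, C).Infinite := fun F hF => by
    have hSF : (S ∩ ⋃ C ∈ F, C).Finite := by
      rw [Set.inter_iUnion₂]
      exact F.finite_toSet.biUnion fun C hC => hfin C (hF hC)
    simpa [Set.sdiff_inter_self_eq_sdiff] using hS.sdiff hSF
  obtain ⟨Z, hZ, F, hF, hZfin⟩ := hmax.exists_almostCoveredWith hSA hS'
  refine ((hmax.1.2 Z hZ F hF).sdiff (hfin Z hZ)) (hZfin.subset ?_)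
  rintro x ⟨⟨hxZ, hxF⟩, hxS⟩
  exact ⟨hxZ, fun h => h.elim (fun h => hxS ⟨h, hxZ⟩) hxF⟩

lemma MaximalIdealIndependent.finite_setOf_hasPrivatePoint {A : Set (Set ℕ)}
    (hmax : MaximalIdealIndependent A) : {B ∈ A | HasPrivatePoint A B}.Finite := by
  by_contra hinf
  choose! p hpB hpriv using fun B (hB : B ∈ {B ∈ A | HasPrivatePoint A B}) => hB.2
  have hinj : Set.InjOn p {B ∈ A | HasPrivatePoint A B} := fun B hB B' hB' h =>
    of_not_not fun hne => hpriv B hB B' hB'.1 (Ne.symm hne) (h ▸ hpB B' hB')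
  obtain ⟨C, hC, hCinf⟩ := hmax.exists_infinite_inter (Set.Infinite.image hinj hinf)
  refine hCinf ((Set.finite_singleton (p C)).subset ?_)
  rintro _ ⟨⟨B, hB, rfl⟩, hpC⟩
  rw [of_not_not fun hCB => hpriv B hB C hC hCB hpC, Set.mem_singleton_iff]

lemma hasPrivatePoint_of_almostCoveredWith {A : Set (Set ℕ)} {X B : Set ℕ}
    (hB : AlmostCoveredWith A X B) (hXB : X ∉ complFilter A B) : HasPrivatePoint A B := by
  obtain ⟨F, hF, hfin⟩ := hB
  refine not_not.1 fun hnone => hXB ?_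
  have hcover : ∀ n ∈ B, ∃ C ∈ A, C ≠ B ∧ n ∈ C := fun n hn => by
    by_contra! h
    exact hnone ⟨n, hn, h⟩
  choose! c hcA hcB hnc using hcover
  refine mem_complFilter.2 ⟨F ∪ hfin.toFinset.image c, fun W hW => ?_, ?_⟩
  · simp only [Finset.coe_union, Finset.coe_image, Set.Finite.coe_toFinset, Set.mem_union,
      Set.mem_image] at hW
    rcases hW with hW | ⟨n, hn, rfl⟩
    · exact hF hW
    · exact ⟨hcA n hn.1, hcB n hn.1⟩
  rintro n ⟨hnB, hnU⟩
  by_contra hnX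
  rw [Finset.set_biUnion_union] at hnU
  have hnR : n ∈ B \ (X ∪ ⋃ Y ∈ F, Y) := ⟨hnB, by rintro (h | h); exacts [hnX h, hnU (Or.inl h)]⟩
  exact hnU (Or.inr (Set.mem_biUnion (Finset.mem_image_of_mem c (hfin.mem_toFinset.2 hnR))
    (hnc n hnB)))

lemma MaximalIdealIndependent.infinite_setOf_almostCoveredWith {A : Set (Set ℕ)} {X : Set ℕ}
    (hmax : MaximalIdealIndependent A)
    (hX : ∀ F : Finset (Set ℕ), ↑F ⊆ A → (X \ ⋃ Y ∈ F, Y).Infinite)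
    (hXA : ∀ B ∈ A, X ∉ complFilter A B) : {B ∈ A | AlmostCoveredWith A X B}.Infinite := by
  intro hfin
  set G := hfin.toFinset
  have hGA : ↑G ⊆ A := fun W hW => (hfin.mem_toFinset.1 hW).1
  set Y := X \ ⋃ W ∈ G, W
  have hYA : Y ∉ A := fun hY => hXA Y hY (mem_complFilter.2 ⟨∅, by simp, by simp [Y]⟩)
  have hY : ∀ F : Finset (Set ℕ), ↑F ⊆ A → (Y \ ⋃ W ∈ F, W).Infinite := fun F hF => by
    rw [Set.sdiff_sdiff, ← Finset.set_biUnion_union]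
    exact hX _ (by simpa using Set.union_subset hGA hF)
  obtain ⟨Z, hZ, F, hF, hZfin⟩ := hmax.exists_almostCoveredWith hYA hY
  have hZG : Z ∈ G := hfin.mem_toFinset.2 ⟨hZ, F, hF,
    hZfin.subset (Set.sdiff_subset_sdiff_right (Set.union_subset_union_left _ Set.sdiff_subset))⟩
  -- `Z ∈ G` is disjoint from `Y`, so `Z` would be almost covered by `F` alone.
  refine hmax.1.2 Z hZ F hF (hZfin.subset ?_)
  rintro x ⟨hxZ, hxF⟩
  exact ⟨hxZ, fun h => h.elim (fun hY => hY.2 (Set.mem_biUnion hZG hxZ)) hxF⟩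

theorem MaximalIdealIndependent.mem_ideal_or_mem_complFilter {A : Set (Set ℕ)}
    (hmax : MaximalIdealIndependent A) (X : Set ℕ) :
    (∃ F : Finset (Set ℕ), ↑F ⊆ A ∧ (X \ ⋃ Y ∈ F, Y).Finite) ∨ ∃ B ∈ A, X ∈ complFilter A B := by
  by_contra! hX
  refine hmax.infinite_setOf_almostCoveredWith hX.1 hX.2
    (hmax.finite_setOf_hasPrivatePoint.subset fun B hB => ⟨hB.1, ?_⟩)
  exact hasPrivatePoint_of_almostCoveredWith hB.2 (hX.2 B hB.1)

theorem IdealIndependent.maximal_of_forall_mem_ideal_or_mem_complFilter {A : Set (Set ℕ)}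
    (hA : IdealIndependent A)
    (h : ∀ X : Set ℕ, X.Infinite →
      (∃ F : Finset (Set ℕ), ↑F ⊆ A ∧ (X \ ⋃ Y ∈ F, Y).Finite) ∨ ∃ B ∈ A, X ∈ complFilter A B) :
    MaximalIdealIndependent A := by
  refine ⟨hA, fun B hB hAB => of_not_not fun hne => ?_⟩
  obtain ⟨X, hXB, hXA⟩ := Set.exists_of_ssubset (hAB.ssubset_of_ne (Ne.symm hne))
  rcases h X (hB.1 X hXB) with ⟨F, hF, hfin⟩ | ⟨C, hC, hXC⟩
  · exact hB.2 X hXB F (fun Y hY => ⟨hAB (hF hY), fun h => hXA (h ▸ hF hY)⟩) hfin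
  · obtain ⟨F, hF, hsub⟩ := mem_complFilter.1 hXC
    refine hB.2 C (hAB hC) (insert X F) ?_ (Set.finite_empty.subset ?_)
    · rw [Finset.coe_insert]
      exact Set.insert_subset ⟨hXB, fun h => hXA (h ▸ hC)⟩ fun Y hY => ⟨hAB (hF hY).1, (hF hY).2⟩
    · rw [Finset.set_biUnion_insert]
      rintro x ⟨hxC, hx⟩
      exact hx (Or.inl (hsub ⟨hxC, fun h => hx (Or.inr h)⟩))

/-- An ideal independent family is maximal iff every infinite `X ⊆ ω` is either in the
ideal generated by `A` or belongs to some complemented filter `𝓕(A, B)`. -/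
theorem stmt4 (A : Set (Set ℕ)) (hA : IdealIndependent A) :
    MaximalIdealIndependent A ↔
      ∀ X : Set ℕ, X.Infinite →
        ((∃ F : Finset (Set ℕ), ↑F ⊆ A ∧ (X \ ⋃ Y ∈ F, Y).Finite) ∨
         (∃ B ∈ A, X ∈ complFilter A B)) :=
  ⟨fun hmax X _ => hmax.mem_ideal_or_mem_complFilter X,
    hA.maximal_of_forall_mem_ideal_or_mem_complFilter⟩
end

section
/- If $\mathcal{A}$ is a maximal ideal independent family, then $\mathcal{A}$ is maximal $\mathcal{J}(\mathcal{A})$-almost disjoint; that is, there is no $B \in \mathcal{J}(\mathcal{A})^+ \setminus \mathcal{A}$ with $B \cap A \in \mathcal{J}(\mathcal{A})$ for all $A \in \mathcal{A}$. -/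
/-!
If `B ∈ 𝓙(A)⁺ \ A` meets every member of `A` in a set of `𝓙(A)`, then `A ∪ {B}` is still
ideal independent, contradicting maximality. `B` is not almost covered by finitely many
`Y ∈ A`, since otherwise `B` would lie in `𝓙(A)` as a finite set plus the sets `B ∩ Y`.
A member `X ∈ A` is not almost covered by `B` together with finitely many others: `X ∩ B`
lies in `𝓙(A)`, and every generator `Y ∩ Z` of `𝓙(A)` meets `X` inside one of `Y`, `Z`
different from `X`, so `X ∩ B` is almost covered by finitely many members of `A \ {X}`.
-/

section idealJ

variable {A : Set (Set ℕ)}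

lemma idealJ_mono {S T : Set ℕ} (h : S ⊆ T) (hT : T ∈ idealJ A) : S ∈ idealJ A := by
  obtain ⟨F, hF, hfin⟩ := hT
  exact ⟨F, hF, hfin.subset (Set.sdiff_subset_sdiff_left h)⟩

lemma idealJ_of_finite {S : Set ℕ} (h : S.Finite) : S ∈ idealJ A :=
  ⟨∅, by simp, by simpa using h⟩

lemma idealJ_union {S T : Set ℕ} (hS : S ∈ idealJ A) (hT : T ∈ idealJ A) :
    S ∪ T ∈ idealJ A := by
  classical
  obtain ⟨F, hF, hFf⟩ := hS
  obtain ⟨G, hG, hGf⟩ := hT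
  refine ⟨F ∪ G, fun p hp => (Finset.mem_union.1 hp).elim (hF p) (hG p), ?_⟩
  rw [Finset.set_biUnion_union]
  exact (hFf.union hGf).subset (by intro n; simp only [Set.mem_sdiff, Set.mem_union]; tauto)

lemma idealJ_biUnion (F : Finset (Set ℕ)) (f : Set ℕ → Set ℕ)
    (h : ∀ Y ∈ F, f Y ∈ idealJ A) : (⋃ Y ∈ F, f Y) ∈ idealJ A := by
  classical
  induction F using Finset.induction_on with
  | empty => simpa using idealJ_of_finite (A := A) Set.finite_empty
  | insert Y F _ ih =>
    rw [Finset.set_biUnion_insert]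
    exact idealJ_union (h Y (F.mem_insert_self Y)) (ih fun Z hZ => h Z (F.mem_insert_of_mem hZ))

lemma exists_finset_inter_diff_finite_of_mem_idealJ {X S : Set ℕ} (hS : S ∈ idealJ A) :
    ∃ G : Finset (Set ℕ), ↑G ⊆ A \ {X} ∧ ((X ∩ S) \ ⋃ Y ∈ G, Y).Finite := by
  classical
  obtain ⟨P, hP, hfin⟩ := hS
  -- the member of the pair `p` that differs from `X`
  let g : Set ℕ × Set ℕ → Set ℕ := fun p => if p.1 = X then p.2 else p.1
  have hg_mem : ∀ p ∈ P, g p ∈ A \ {X} := by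
    intro p hp
    obtain ⟨h1, h2, hne⟩ := hP p hp
    by_cases hc : p.1 = X
    · simp only [g, hc, if_true]
      exact ⟨h2, fun h => hne (hc.trans h.symm)⟩
    · simp only [g, hc, if_false]
      exact ⟨h1, hc⟩
  have hg_sup : ∀ p ∈ P, X ∩ (p.1 ∩ p.2) ⊆ g p := by
    intro p _ n hn
    by_cases hc : p.1 = X
    · simpa [g, hc] using hn.2.2
    · simpa [g, hc] using hn.2.1
  refine ⟨P.image g, ?_, hfin.subset ?_⟩
  · rw [Finset.coe_image, Set.image_subset_iff]
    exact hg_mem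
  rintro n ⟨⟨hnX, hnS⟩, hnG⟩
  refine ⟨hnS, fun hnP => hnG ?_⟩
  simp only [Set.mem_iUnion] at hnP
  obtain ⟨p, hp, hnp⟩ := hnP
  simp only [Finset.set_biUnion_finset_image, Set.mem_iUnion]
  exact ⟨p, hp, hg_sup p hp ⟨hnX, hnp⟩⟩

end idealJ

lemma IdealIndependent.diff_biUnion_union_infinite {A : Set (Set ℕ)} (hA : IdealIndependent A)
    {X S : Set ℕ} (hX : X ∈ A) (hS : X ∩ S ∈ idealJ A) {F : Finset (Set ℕ)}
    (hF : ↑F ⊆ A \ {X}) : (X \ ((⋃ Y ∈ F, Y) ∪ S)).Infinite := by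
  classical
  obtain ⟨G, hG, hfin⟩ := exists_finset_inter_diff_finite_of_mem_idealJ hS
  have hFG : (X \ ⋃ Y ∈ F ∪ G, Y).Infinite :=
    hA.2 X hX (F ∪ G) (by rw [Finset.coe_union]; exact Set.union_subset hF hG)
  rw [← Set.inter_assoc, Set.inter_self] at hfin
  refine (hFG.sdiff hfin).mono ?_
  rw [Finset.set_biUnion_union]
  intro n
  simp only [Set.mem_sdiff, Set.mem_union, Set.mem_inter_iff]
  tauto

lemma IdealIndependent.insert {A : Set (Set ℕ)} (hA : IdealIndependent A) {B : Set ℕ}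
    (hB : B ∉ idealJ A) (hBX : ∀ X ∈ A, B ∩ X ∈ idealJ A) : IdealIndependent (insert B A) := by
  classical
  refine ⟨?_, ?_⟩
  · rintro X (rfl | hX)
    · exact fun hfin => hB (idealJ_of_finite hfin)
    · exact hA.1 X hX
  rintro X (rfl | hX) F hF
  · have hFA : ∀ Y ∈ F, Y ∈ A := fun Y hY =>
      ((hF hY).1).resolve_left (hF hY).2
    intro hfin
    refine hB (idealJ_mono (Set.sdiff_union_inter X (⋃ Y ∈ F, Y)).ge
      (idealJ_union (idealJ_of_finite hfin) ?_))
    rw [Set.inter_iUnion₂]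
    exact idealJ_biUnion F _ fun Y hY => hBX Y (hFA Y hY)
  · have hF' : ↑(F.erase B) ⊆ A \ {X} := by
      intro Y hY
      obtain ⟨hYB, hYF⟩ := Finset.mem_erase.1 hY
      exact ⟨((hF hYF).1).resolve_left hYB, (hF hYF).2⟩
    refine (hA.diff_biUnion_union_infinite hX (Set.inter_comm X B ▸ hBX X hX) hF').mono ?_
    refine Set.sdiff_subset_sdiff_right (Set.iUnion₂_subset fun Y hY => ?_)
    by_cases hYB : Y = B
    · exact hYB ▸ Set.subset_union_right
    · exact Set.subset_union_of_subset_left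
        (Set.subset_biUnion_of_mem (u := id) (Finset.mem_erase.2 ⟨hYB, hY⟩)) _

/-- A maximal ideal independent family is maximal `𝓙(A)`-almost disjoint. -/
theorem stmt5 (A : Set (Set ℕ)) (hA : MaximalIdealIndependent A) :
    ¬ ∃ B : Set ℕ, B ∉ idealJ A ∧ B ∉ A ∧ ∀ X ∈ A, B ∩ X ∈ idealJ A := by
  rintro ⟨B, hBJ, hBA, hBX⟩
  have hEq : insert B A = A := hA.2 _ (hA.1.insert hBJ hBX) (Set.subset_insert B A)
  exact hBA (hEq ▸ Set.mem_insert B A)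
end

section
/- An ideal independent family $\mathcal{A}$ is maximal if and only if $\mathcal{A}$ is maximal $\mathcal{J}(\mathcal{A})$-almost disjoint and $\mathcal{J}(\mathcal{A})$-completely separable. -/
/-!
Call `X` almost covered by `S` if `X ⊆ ⋃ 𝓑` up to a finite set, for a finite `𝓑 ⊆ S`.
Below a member `C` of `A`, the ideal `𝓙(A)` consists exactly of the sets almost covered by
`A \ {C}`. Hence, for `Z ∉ A`, the family `A ∪ {Z}` is ideal independent iff `Z` is not almost
covered by `A` and no `C \ Z` (`C ∈ A`) lies in `𝓙(A)`; so `A` is maximal iff every `Z ∉ A` is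
almost covered by `A` or satisfies `C ⊆^𝓙 Z` for some `C ∈ A`. A set almost covered by `A` has
only finitely many `𝓙(A)`-positive traces `Z ∩ B`, `B ∈ A`, and for a maximal `𝓙(A)`-almost
disjoint family the converse holds: removing those finitely many `B` from `Z` leaves a set with
all traces in `𝓙(A)`, which therefore lies in `𝓙(A)` or in `A`. Splitting on whether
`Z ∈ A^{++}` gives both directions.
-/

open Set

def AlmostCovered (S : Set (Set ℕ)) (X : Set ℕ) : Prop :=
  ∃ F : Finset (Set ℕ), ↑F ⊆ S ∧ (X \ ⋃ Y ∈ F, Y).Finite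

namespace AlmostCovered

variable {S T : Set (Set ℕ)} {X X' : Set ℕ}

lemma of_finite (hX : X.Finite) : AlmostCovered S X :=
  ⟨∅, by simp, by simpa using hX⟩

lemma of_mem (hX : X ∈ S) : AlmostCovered S X :=
  ⟨{X}, by simpa using hX, by simp⟩

lemma anti (hX : X' ⊆ X) (h : AlmostCovered S X) : AlmostCovered S X' :=
  let ⟨F, hFS, hF⟩ := h
  ⟨F, hFS, hF.subset (sdiff_subset_sdiff_left hX)⟩

lemma mono (hST : S ⊆ T) (h : AlmostCovered S X) : AlmostCovered T X :=
  let ⟨F, hFS, hF⟩ := h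
  ⟨F, hFS.trans hST, hF⟩

lemma union (hX : AlmostCovered S X) (hX' : AlmostCovered S X') :
    AlmostCovered S (X ∪ X') := by
  classical
  obtain ⟨F, hFS, hF⟩ := hX
  obtain ⟨F', hFS', hF'⟩ := hX'
  refine ⟨F ∪ F', by simpa using ⟨hFS, hFS'⟩, (hF.union hF').subset ?_⟩
  rw [Finset.set_biUnion_union, union_sdiff_distrib]
  exact union_subset_union (sdiff_subset_sdiff_right subset_union_left)
    (sdiff_subset_sdiff_right subset_union_right)

lemma trans (h : AlmostCovered S X) (hT : ∀ Y ∈ S, AlmostCovered T (X ∩ Y)) :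
    AlmostCovered T X := by
  classical
  obtain ⟨F, hFS, hF⟩ := h
  choose! G hGT hG using hT
  refine ⟨F.biUnion G, ?_, ?_⟩
  · simpa using fun Y hY => hGT Y (hFS hY)
  · refine (hF.union (F.finite_toSet.biUnion fun Y hY => hG Y (hFS hY))).subset ?_
    intro x ⟨hxX, hxG⟩
    simp only [Finset.set_biUnion_biUnion, mem_iUnion, not_exists] at hxG
    by_cases hxF : x ∈ ⋃ Y ∈ F, Y
    · simp only [mem_iUnion] at hxF
      obtain ⟨Y, hYF, hxY⟩ := hxF
      exact Or.inr (mem_biUnion hYF ⟨⟨hxX, hxY⟩, by simpa using hxG Y hYF⟩)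
    · exact Or.inl ⟨hxX, hxF⟩

lemma of_diff_biUnion {F : Finset (Set ℕ)} (hFS : ↑F ⊆ S)
    (h : AlmostCovered S (X \ ⋃ Y ∈ F, Y)) : AlmostCovered S X :=
  (show AlmostCovered S (⋃ Y ∈ F, Y) from ⟨F, hFS, by simp⟩).union h |>.anti fun x hx => by
    by_cases hxF : x ∈ ⋃ Y ∈ F, Y
    exacts [Or.inl hxF, Or.inr ⟨hx, hxF⟩]

end AlmostCovered

lemma almostCovered_insert_iff {S : Set (Set ℕ)} {X Z : Set ℕ} :
    AlmostCovered (insert Z S) X ↔ AlmostCovered S (X \ Z) := by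
  classical
  constructor
  · rintro ⟨F, hFS, hF⟩
    refine ⟨F.erase Z, ?_, hF.subset ?_⟩
    · intro Y hY
      simp only [Finset.coe_erase, mem_sdiff, Finset.mem_coe, mem_singleton_iff] at hY
      exact (hFS hY.1).resolve_left hY.2
    · rintro x ⟨⟨hxX, hxZ⟩, hxF⟩
      refine ⟨hxX, fun hx => hxF ?_⟩
      simp only [mem_iUnion] at hx ⊢
      obtain ⟨Y, hYF, hxY⟩ := hx
      exact ⟨Y, Finset.mem_erase.2 ⟨fun h => hxZ (h ▸ hxY), hYF⟩, hxY⟩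
  · rintro ⟨F, hFS, hF⟩
    refine ⟨insert Z F, by simpa using insert_subset_insert hFS, ?_⟩
    rwa [Finset.set_biUnion_insert, ← sdiff_sdiff]

def pairwiseInters (A : Set (Set ℕ)) : Set (Set ℕ) :=
  (fun p : Set ℕ × Set ℕ => p.1 ∩ p.2) '' {p | p.1 ∈ A ∧ p.2 ∈ A ∧ p.1 ≠ p.2}

section IdealJ

variable {A : Set (Set ℕ)} {B C X : Set ℕ}

lemma mem_idealJ_iff : X ∈ idealJ A ↔ AlmostCovered (pairwiseInters A) X := by
  classical
  constructor
  · rintro ⟨F, hFA, hF⟩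
    refine ⟨F.image fun p => p.1 ∩ p.2, ?_, ?_⟩
    · rw [Finset.coe_image]
      exact image_mono hFA
    · rwa [Finset.set_biUnion_finset_image]
  · rintro ⟨G, hGA, hG⟩
    obtain ⟨F, hFA, rfl⟩ := Finset.subset_set_image_iff.1 hGA
    exact ⟨F, hFA, by rwa [Finset.set_biUnion_finset_image] at hG⟩

lemma inter_mem_pairwiseInters (hB : B ∈ A) (hC : C ∈ A) (hBC : B ≠ C) :
    B ∩ C ∈ pairwiseInters A :=
  ⟨(B, C), ⟨hB, hC, hBC⟩, rfl⟩

lemma AlmostCovered.of_mem_idealJ (h : X ∈ idealJ A) : AlmostCovered A X :=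
  (mem_idealJ_iff.1 h).trans <| by
    rintro _ ⟨⟨B, C⟩, ⟨hB, -, -⟩, rfl⟩
    exact (AlmostCovered.of_mem hB).anti (inter_subset_right.trans inter_subset_left)

lemma mem_idealJ_iff_almostCovered (hC : C ∈ A) (hX : X ⊆ C) :
    X ∈ idealJ A ↔ AlmostCovered (A \ {C}) X := by
  constructor
  · refine fun h => (mem_idealJ_iff.1 h).trans ?_
    rintro _ ⟨⟨B, B'⟩, ⟨hB, hB', hBB'⟩, rfl⟩
    by_cases hBC : B = C
    · subst hBC
      exact (AlmostCovered.of_mem (S := A \ {B}) ⟨hB', Ne.symm hBB'⟩).anti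
        (inter_subset_right.trans inter_subset_right)
    · exact (AlmostCovered.of_mem (S := A \ {C}) ⟨hB, hBC⟩).anti
        (inter_subset_right.trans inter_subset_left)
  · refine fun h => mem_idealJ_iff.2 (h.trans fun Y ⟨hY, hYC⟩ => ?_)
    exact (AlmostCovered.of_mem (inter_mem_pairwiseInters hC hY (Ne.symm hYC))).anti
      (inter_subset_inter_left Y hX)

lemma AlmostCovered.mem_idealJ (h : AlmostCovered A X) (hX : ∀ Y ∈ A, X ∩ Y ∈ idealJ A) :
    X ∈ idealJ A :=
  mem_idealJ_iff.2 (h.trans fun Y hY => mem_idealJ_iff.1 (hX Y hY))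

lemma AlmostCovered.inter_mem_idealJ (h : AlmostCovered (A \ {C}) X) (hC : C ∈ A) :
    X ∩ C ∈ idealJ A :=
  (mem_idealJ_iff_almostCovered hC inter_subset_right).2 (h.anti inter_subset_left)

end IdealJ

section IdealIndependent

variable {A A' : Set (Set ℕ)} {X Z : Set ℕ}

lemma idealIndependent_iff : IdealIndependent A ↔ ∀ X ∈ A, ¬AlmostCovered (A \ {X}) X :=
  ⟨fun h X hX ⟨F, hFA, hF⟩ => h.2 X hX F hFA hF,
   fun h => ⟨fun X hX hX' => h X hX (.of_finite hX'),
     fun X hX F hFA hF => h X hX ⟨F, hFA, hF⟩⟩⟩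

lemma IdealIndependent.anti (h : IdealIndependent A') (hAA' : A ⊆ A') : IdealIndependent A :=
  idealIndependent_iff.2 fun X hX hcov =>
    idealIndependent_iff.1 h X (hAA' hX) (hcov.mono (sdiff_subset_sdiff_left hAA'))

lemma IdealIndependent.notMem_idealJ (h : IdealIndependent A) (hX : X ∈ A) : X ∉ idealJ A :=
  fun hJ => idealIndependent_iff.1 h X hX ((mem_idealJ_iff_almostCovered hX subset_rfl).1 hJ)

lemma idealIndependent_insert_iff (hZ : Z ∉ A) :
    IdealIndependent (insert Z A) ↔ ¬AlmostCovered A Z ∧ ∀ C ∈ A, C \ Z ∉ idealJ A := by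
  rw [idealIndependent_iff, forall_mem_insert, insert_sdiff_self_of_notMem hZ]
  refine and_congr_right' (forall₂_congr fun C hC => ?_)
  have hZC : Z ∉ ({C} : Set (Set ℕ)) := fun h => hZ (mem_singleton_iff.1 h ▸ hC)
  rw [insert_sdiff_of_notMem _ hZC, almostCovered_insert_iff,
    mem_idealJ_iff_almostCovered hC sdiff_subset]

lemma maximalIdealIndependent_iff (h : IdealIndependent A) :
    MaximalIdealIndependent A ↔ ∀ Z ∉ A, ¬IdealIndependent (insert Z A) := by
  refine ⟨fun hmax Z hZ hins => hZ ?_, fun hmax => ⟨h, fun B hB hAB => ?_⟩⟩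
  · exact hmax.2 _ hins (subset_insert Z A) ▸ mem_insert Z A
  · refine subset_antisymm (fun Z hZ => ?_) hAB
    by_contra hZA
    exact hmax Z hZA (hB.anti (insert_subset hZ hAB))

lemma maximalIdealIndependent_iff_forall_notMem (h : IdealIndependent A) :
    MaximalIdealIndependent A ↔ ∀ Z ∉ A, AlmostCovered A Z ∨ ∃ C ∈ A, C \ Z ∈ idealJ A := by
  refine (maximalIdealIndependent_iff h).trans (forall₂_congr fun Z hZ => ?_)
  simp only [idealIndependent_insert_iff hZ, not_and_or, not_not, not_forall, exists_prop]

end IdealIndependent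

section Traces

variable {A : Set (Set ℕ)} {Z : Set ℕ}

lemma AlmostCovered.finite_setOf_inter_notMem_idealJ (h : AlmostCovered A Z) :
    {B | B ∈ A ∧ Z ∩ B ∉ idealJ A}.Finite := by
  obtain ⟨F, hFA, hF⟩ := h
  refine F.finite_toSet.subset fun B ⟨hB, hZB⟩ => ?_
  by_contra hBF
  refine hZB (AlmostCovered.inter_mem_idealJ ⟨F, fun Y hY => ⟨hFA hY, fun hYB => ?_⟩, hF⟩ hB)
  exact hBF (mem_singleton_iff.1 hYB ▸ hY)

lemma almostCovered_of_finite_setOf_inter_notMem_idealJ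
    (hmad : ∀ B : Set ℕ, B ∉ idealJ A → B ∉ A → ∃ X ∈ A, B ∩ X ∉ idealJ A)
    (hfin : {B | B ∈ A ∧ Z ∩ B ∉ idealJ A}.Finite) : AlmostCovered A Z := by
  refine AlmostCovered.of_diff_biUnion (F := hfin.toFinset) (fun B hB => ?_) ?_
  · exact (hfin.mem_toFinset.1 hB).1
  set Z' := Z \ ⋃ Y ∈ hfin.toFinset, Y
  have htraces : ∀ X ∈ A, Z' ∩ X ∈ idealJ A := by
    intro X hX
    refine mem_idealJ_iff.2 ?_
    by_cases hZX : Z ∩ X ∈ idealJ A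
    · exact (mem_idealJ_iff.1 hZX).anti (inter_subset_inter_left X sdiff_subset)
    · refine .of_finite (finite_empty.subset fun x ⟨⟨_, hxF⟩, hxX⟩ => hxF ?_)
      exact mem_biUnion (hfin.mem_toFinset.2 ⟨hX, hZX⟩) hxX
  by_cases hZ'J : Z' ∈ idealJ A
  · exact .of_mem_idealJ hZ'J
  by_cases hZ'A : Z' ∈ A
  · exact .of_mem hZ'A
  obtain ⟨X, hX, hZ'X⟩ := hmad Z' hZ'J hZ'A
  exact absurd (htraces X hX) hZ'X

end Traces

/-- An ideal independent family `A` is maximal iff it is maximal `𝓙(A)`-almost disjoint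
and `𝓙(A)`-completely separable. -/
theorem stmt6 (A : Set (Set ℕ)) (hA : IdealIndependent A) :
    MaximalIdealIndependent A ↔
      ((∀ B : Set ℕ, B ∉ idealJ A → B ∉ A → ∃ X ∈ A, B ∩ X ∉ idealJ A) ∧
       (∀ X : Set ℕ, X.Infinite → {B | B ∈ A ∧ X ∩ B ∉ idealJ A}.Infinite →
          ∃ C ∈ A, C \ X ∈ idealJ A)) := by
  rw [maximalIdealIndependent_iff_forall_notMem hA]
  constructor
  · intro hmax
    refine ⟨fun B hBJ hBA => ?_, fun X _ hX => ?_⟩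
    · by_contra! htraces
      obtain hcov | ⟨C, hC, hCB⟩ := hmax B hBA
      · exact hBJ (hcov.mem_idealJ htraces)
      · refine hA.notMem_idealJ hC ?_
        rw [mem_idealJ_iff, ← sdiff_union_inter C B, inter_comm]
        exact (mem_idealJ_iff.1 hCB).union (mem_idealJ_iff.1 (htraces C hC))
    · by_cases hXA : X ∈ A
      · exact ⟨X, hXA, by simpa using mem_idealJ_iff.2 (.of_finite finite_empty)⟩
      · exact (hmax X hXA).resolve_left fun hcov => hX hcov.finite_setOf_inter_notMem_idealJ
  · rintro ⟨hmad, hsep⟩ Z hZ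
    by_cases hfin : {B | B ∈ A ∧ Z ∩ B ∉ idealJ A}.Finite
    · exact .inl (almostCovered_of_finite_setOf_inter_notMem_idealJ hmad hfin)
    · refine .inr (hsep Z (fun hZfin => hfin ?_) hfin)
      exact (AlmostCovered.of_finite hZfin).finite_setOf_inter_notMem_idealJ
end

section
/- For a maximal $\mathcal{J}$-almost disjoint family $\mathcal{A}$, the sets $\mathcal{A}^{+_{\mathcal{J}}}$ and $\mathcal{A}^{++_{\mathcal{J}}}$ coincide. -/
/-!
If `X` meets infinitely many members of `A` positively, then for a finite `F ⊆ A` some member `B ∉ F`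
meets `X` positively, while `B` is almost disjoint from `⋃ F`; so `X \ ⋃ F` must be positive.
Conversely, if only the finitely many members of a set `F` meet `X` positively, then `X \ ⋃ F` is
almost disjoint from every member of `A`, and maximality forces it into `J`.
-/

namespace AlmostDisjoint

variable {J A : Set (Set ℕ)}

theorem biUnion_mem (hEmpty : ∅ ∈ J) (hUnion : ∀ S T : Set ℕ, S ∈ J → T ∈ J → S ∪ T ∈ J)
    (F : Finset (Set ℕ)) (g : Set ℕ → Set ℕ) (hg : ∀ Y ∈ F, g Y ∈ J) :
    (⋃ Y ∈ F, g Y) ∈ J := by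
  classical
  induction F using Finset.induction_on with
  | empty => simpa using hEmpty
  | insert Y F _ ih =>
    rw [Finset.set_biUnion_insert]
    exact hUnion _ _ (hg Y (Finset.mem_insert_self _ _))
      (ih fun Z hZ => hg Z (Finset.mem_insert_of_mem hZ))

theorem exists_inter_notMem_of_maximal
    (hMax : ∀ X : Set ℕ, X ∉ J → X ∉ A → ∃ B ∈ A, X ∩ B ∉ J) {Y : Set ℕ} (hY : Y ∉ J) :
    ∃ B ∈ A, Y ∩ B ∉ J := by
  by_cases hYA : Y ∈ A
  · exact ⟨Y, hYA, by rwa [Set.inter_self]⟩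
  · exact hMax Y hY hYA

theorem setOf_inter_notMem_infinite_of_maximal (hEmpty : ∅ ∈ J)
    (hDown : ∀ S T : Set ℕ, S ⊆ T → T ∈ J → S ∈ J)
    (hMax : ∀ X : Set ℕ, X ∉ J → X ∉ A → ∃ B ∈ A, X ∩ B ∉ J) {X : Set ℕ}
    (hX : ∀ F : Finset (Set ℕ), ↑F ⊆ A → (X \ ⋃ Y ∈ F, Y) ∉ J) :
    {B | B ∈ A ∧ X ∩ B ∉ J}.Infinite := by
  intro hfin
  obtain ⟨B, hBA, hYB⟩ := exists_inter_notMem_of_maximal hMax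
    (hX hfin.toFinset fun B hB => (hfin.mem_toFinset.mp hB).1)
  apply hYB
  by_cases hXB : X ∩ B ∈ J
  · exact hDown _ _ (Set.inter_subset_inter_left _ Set.sdiff_subset) hXB
  · have hB : B ∈ hfin.toFinset := hfin.mem_toFinset.mpr ⟨hBA, hXB⟩
    convert hEmpty
    exact Set.eq_empty_of_forall_notMem fun n ⟨⟨_, hn⟩, hnB⟩ => hn (Set.mem_biUnion hB hnB)

theorem diff_biUnion_notMem_of_infinite_inter_notMem (hEmpty : ∅ ∈ J)
    (hDown : ∀ S T : Set ℕ, S ⊆ T → T ∈ J → S ∈ J)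
    (hUnion : ∀ S T : Set ℕ, S ∈ J → T ∈ J → S ∪ T ∈ J)
    (hAD : ∀ X ∈ A, ∀ Y ∈ A, X ≠ Y → X ∩ Y ∈ J) {X : Set ℕ}
    (hX : {B | B ∈ A ∧ X ∩ B ∉ J}.Infinite) (F : Finset (Set ℕ)) (hF : ↑F ⊆ A) :
    (X \ ⋃ Y ∈ F, Y) ∉ J := by
  intro hdiff
  obtain ⟨B, ⟨hBA, hXB⟩, hBF⟩ := hX.exists_notMem_finset F
  have hcover : X ∩ B ⊆ (X \ ⋃ Y ∈ F, Y) ∪ ⋃ Y ∈ F, B ∩ Y := by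
    rintro n ⟨hnX, hnB⟩
    by_cases hn : n ∈ ⋃ Y ∈ F, Y
    · obtain ⟨Y, hY, hnY⟩ := Set.mem_iUnion₂.mp hn
      exact Or.inr (Set.mem_biUnion hY ⟨hnB, hnY⟩)
    · exact Or.inl ⟨hnX, hn⟩
  have hmeet : (⋃ Y ∈ F, B ∩ Y) ∈ J :=
    biUnion_mem hEmpty hUnion F _ fun Y hY => hAD B hBA Y (hF hY) fun h => hBF (h ▸ hY)
  exact hXB (hDown _ _ hcover (hUnion _ _ hdiff hmeet))

end AlmostDisjoint

open AlmostDisjoint in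
theorem stmt9_general (J : Set (Set ℕ)) (A : Set (Set ℕ))
    (hFin : ∀ S : Set ℕ, S.Finite → S ∈ J)
    (hDown : ∀ S T : Set ℕ, S ⊆ T → T ∈ J → S ∈ J)
    (hUnion : ∀ S T : Set ℕ, S ∈ J → T ∈ J → S ∪ T ∈ J)
    (hAD : ∀ X ∈ A, ∀ Y ∈ A, X ≠ Y → X ∩ Y ∈ J)
    (hMax : ∀ X : Set ℕ, X ∉ J → X ∉ A → ∃ B ∈ A, X ∩ B ∉ J) :
    {X : Set ℕ | X.Infinite ∧ ∀ F : Finset (Set ℕ), ↑F ⊆ A → (X \ ⋃ Y ∈ F, Y) ∉ J} =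
    {X : Set ℕ | X.Infinite ∧ {B | B ∈ A ∧ X ∩ B ∉ J}.Infinite} := by
  have hEmpty : ∅ ∈ J := hFin ∅ Set.finite_empty
  ext X
  exact and_congr_right fun _ =>
    ⟨setOf_inter_notMem_infinite_of_maximal hEmpty hDown hMax,
      diff_biUnion_notMem_of_infinite_inter_notMem hEmpty hDown hUnion hAD⟩

/-- For a maximal `J`-almost disjoint family `A`, the sets `A⁺ᴶ` and `A⁺⁺ᴶ` coincide. -/
theorem stmt9 (J : Set (Set ℕ)) (A : Set (Set ℕ))
    (hFin : ∀ S : Set ℕ, S.Finite → S ∈ J)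
    (hDown : ∀ S T : Set ℕ, S ⊆ T → T ∈ J → S ∈ J)
    (hUnion : ∀ S T : Set ℕ, S ∈ J → T ∈ J → S ∪ T ∈ J)
    (hProper : (Set.univ : Set ℕ) ∉ J)
    (hPos : ∀ X ∈ A, X ∉ J)
    (hAD : ∀ X ∈ A, ∀ Y ∈ A, X ≠ Y → X ∩ Y ∈ J)
    (hMax : ∀ X : Set ℕ, X ∉ J → X ∉ A → ∃ B ∈ A, X ∩ B ∉ J) :
    {X : Set ℕ | X.Infinite ∧ ∀ F : Finset (Set ℕ), ↑F ⊆ A → (X \ ⋃ Y ∈ F, Y) ∉ J} =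
    {X : Set ℕ | X.Infinite ∧ {B | B ∈ A ∧ X ∩ B ∉ J}.Infinite} :=
  stmt9_general J A hFin hDown hUnion hAD hMax
end

section
/- The ultrafilter number $\mathfrak{u}$ is less than or equal to $\mathfrak{s}_{mm}$, the minimal cardinality of an infinite maximal ideal independent family. -/
/-- The ultrafilter number 𝔲: least cardinality of a base of a non-principal
ultrafilter on ω. -/
noncomputable def uNum : Cardinal :=
  sInf {c | ∃ (U : Ultrafilter ℕ) (B : Set (Set ℕ)),
    (∀ S : Set ℕ, S.Finite → S ∉ U) ∧
    (∀ b ∈ B, b ∈ U) ∧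
    (∀ S ∈ U, ∃ b ∈ B, (b \ S).Finite) ∧
    c = Cardinal.mk ↥B}

/-- 𝔰ₘₘ: least cardinality of an infinite maximal ideal independent family. -/
noncomputable def smm : Cardinal :=
  sInf {c | ∃ A : Set (Set ℕ), A.Infinite ∧ MaximalIdealIndependent A ∧ c = Cardinal.mk ↥A}

/-!
Let `A` be an infinite maximal ideal independent family. If for some `X ∈ A` the generators
`X \ ⋃ 𝓑` of `𝓕(A, X)` decide every subset of `ℕ` up to finite sets, they form a base of a
non-principal ultrafilter of size at most `|A|`, so `𝔲 ≤ |A|`.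

Otherwise every `X ∈ A` has a set `C_X` splitting all its generators. Pick distinct `X_n ∈ A`;
the pieces `R_n = (X_n ∩ C_n) \ ⋃_{k<n} X_k` are pairwise disjoint. For a branch `f ∈ 2^ω` let
`D_f` be the union of the pieces indexed by the codes of the initial segments of `f`. Each `D_f`
escapes every finite union from `A`, so by maximality some generator of some `Z_f ∈ A` is almost
contained in `D_f`, and `Z_f` is none of the `X_n` because `C_n` splits the generators of `X_n`.
For `f ≠ g` the set `D_f ∩ D_g` is covered by finitely many `X_n`, so ideal independence of `A`
forces `Z_f ≠ Z_g`. Hence `𝔲 ≤ 𝔠 ≤ |A|`.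
-/

open Cardinal Set

section IdealIndependent

variable {A : Set (Set ℕ)} {X : Set ℕ}

lemma idealIndependent_of_pairwiseDisjoint (hinf : ∀ X ∈ A, X.Infinite)
    (hdisj : A.PairwiseDisjoint id) : IdealIndependent A := by
  refine ⟨hinf, fun X hX F hF => ?_⟩
  have hXF : X \ ⋃ Y ∈ F, Y = X := by
    refine sdiff_eq_left.2 (disjoint_iUnion₂_right.2 fun Y hY => ?_)
    exact hdisj hX (hF hY).1 (Ne.symm (hF hY).2)
  rw [hXF]
  exact hinf X hX

lemma idealIndependent_sUnion_of_isChain {c : Set (Set (Set ℕ))} (hc : IsChain (· ⊆ ·) c)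
    (h : ∀ B ∈ c, IdealIndependent B) : IdealIndependent (⋃₀ c) := by
  refine ⟨fun X ⟨B, hB, hX⟩ => (h B hB).1 X hX, fun X hX F hF => ?_⟩
  obtain ⟨B, hBc, hB⟩ := hc.directedOn.exists_mem_subset_of_finite_of_subset_sUnion
    ⟨_, hX.choose_spec.1⟩ (insert X F).finite_toSet
    (by rw [Finset.coe_insert]; exact insert_subset hX fun Y hY => (hF hY).1)
  rw [Finset.coe_insert, insert_subset_iff] at hB
  exact (h B hBc).2 X hB.1 F fun Y hY => ⟨hB.2 hY, (hF hY).2⟩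

lemma IdealIndependent.exists_maximal_superset (hA : IdealIndependent A) :
    ∃ M, A ⊆ M ∧ MaximalIdealIndependent M := by
  obtain ⟨M, hAM, hM⟩ := zorn_subset_nonempty {B | IdealIndependent B}
    (fun c hc hchain _ =>
      ⟨⋃₀ c, idealIndependent_sUnion_of_isChain hchain hc, fun _ => subset_sUnion_of_mem⟩) A hA
  exact ⟨M, hAM, hM.1, fun B hB hMB => (hM.eq_of_subset hB hMB).symm⟩

lemma exists_infinite_maximalIdealIndependent :
    ∃ A : Set (Set ℕ), A.Infinite ∧ MaximalIdealIndependent A := by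
  let column : ℕ → Set ℕ := fun k => {n | n.unpair.1 = k}
  have hcolumn : ∀ k, (column k).Infinite := fun k =>
    infinite_of_injective_forall_mem (f := Nat.pair k)
      (fun _ _ h => (Nat.pair_eq_pair.1 h).2) (by simp [column])
  have hcolumn_inj : Function.Injective column := fun k l h => by
    simpa [column] using h.subset (show Nat.pair k 0 ∈ column k by simp [column])
  have hindep : IdealIndependent (range column) := by
    refine idealIndependent_of_pairwiseDisjoint (by simpa using hcolumn)
      (pairwiseDisjoint_range_iff.2 fun k l hkl => ?_)
    exact disjoint_left.2 fun n hk hl => hkl (by simp_all [column])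
  obtain ⟨M, hM, hMmax⟩ := hindep.exists_maximal_superset
  exact ⟨M, (infinite_range_of_injective hcolumn_inj).mono hM, hMmax⟩

lemma self_mem_genSets : X ∈ genSets A X :=
  ⟨∅, by simp, by simp⟩

lemma genSets_subset {b : Set ℕ} (hb : b ∈ genSets A X) : b ⊆ X := by
  obtain ⟨F, -, rfl⟩ := hb
  exact sdiff_subset

lemma inter_mem_genSets {b₁ b₂ : Set ℕ} (h₁ : b₁ ∈ genSets A X) (h₂ : b₂ ∈ genSets A X) :
    b₁ ∩ b₂ ∈ genSets A X := by
  obtain ⟨F₁, hF₁, rfl⟩ := h₁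
  obtain ⟨F₂, hF₂, rfl⟩ := h₂
  refine ⟨F₁ ∪ F₂, by simpa using union_subset hF₁ hF₂, ?_⟩
  rw [Finset.set_biUnion_union, sdiff_inter_sdiff]

lemma diff_biUnion_mem_genSets {b : Set ℕ} {H : Finset (Set ℕ)} (hb : b ∈ genSets A X)
    (hH : ↑H ⊆ A \ {X}) : b \ ⋃ Y ∈ H, Y ∈ genSets A X := by
  obtain ⟨F, hF, rfl⟩ := hb
  refine ⟨F ∪ H, by simpa using union_subset hF hH, ?_⟩
  rw [Finset.set_biUnion_union, sdiff_sdiff]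

lemma IdealIndependent.infinite_of_mem_genSets (hA : IdealIndependent A) (hX : X ∈ A)
    {b : Set ℕ} (hb : b ∈ genSets A X) : b.Infinite := by
  obtain ⟨F, hF, rfl⟩ := hb
  exact hA.2 X hX F hF

lemma mk_genSets_le (hA : A.Infinite) : #(genSets A X) ≤ #A := by
  classical
  have : Infinite A := hA.to_subtype
  let gen : Finset A → Set ℕ := fun F => X \ ⋃ Y ∈ F.map (Function.Embedding.subtype _), Y
  have hsub : genSets A X ⊆ range gen := by
    rintro _ ⟨F, hF, rfl⟩
    refine ⟨F.subtype (· ∈ A), ?_⟩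
    simp only [gen, Finset.subtype_map_of_mem fun Y hY => (hF hY).1]
  calc #(genSets A X) ≤ #(range gen) := mk_le_mk_of_subset hsub
    _ ≤ #(Finset A) := mk_range_le
    _ = #A := mk_finset_of_infinite A

lemma IdealIndependent.not_inter_subset_biUnion (hA : IdealIndependent A) (hX : X ∈ A)
    {b₁ b₂ D₁ D₂ : Set ℕ} (hb₁ : b₁ ∈ genSets A X) (hb₂ : b₂ ∈ genSets A X)
    (h₁ : (b₁ \ D₁).Finite) (h₂ : (b₂ \ D₂).Finite) {H : Finset (Set ℕ)} (hH : ↑H ⊆ A \ {X}) :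
    ¬ D₁ ∩ D₂ ⊆ ⋃ Y ∈ H, Y := by
  intro hD
  refine hA.infinite_of_mem_genSets hX (diff_biUnion_mem_genSets (inter_mem_genSets hb₁ hb₂) hH)
    ((h₁.union h₂).subset ?_)
  rintro x ⟨⟨hx₁, hx₂⟩, hxH⟩
  by_cases hxD₁ : x ∈ D₁
  · exact Or.inr ⟨hx₂, fun hxD₂ => hxH (hD ⟨hxD₁, hxD₂⟩)⟩
  · exact Or.inl ⟨hx₁, hxD₁⟩

lemma MaximalIdealIndependent.exists_genSets_diff_finite (hA : MaximalIdealIndependent A)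
    {D : Set ℕ} (hD : ∀ G : Finset (Set ℕ), ↑G ⊆ A → (D \ ⋃ Y ∈ G, Y).Infinite) :
    ∃ Z ∈ A, ∃ b ∈ genSets A Z, (b \ D).Finite := by
  by_contra! h
  have hDA : D ∉ A := fun hDA => h D hDA D self_mem_genSets (by simp)
  have hindep : IdealIndependent (insert D A) := by
    refine ⟨forall_mem_insert.2 ⟨by simpa using hD ∅ (by simp), hA.1.1⟩, ?_⟩
    rintro Z (rfl | hZ) F hF
    · exact hD F fun Y hY => ((mem_insert_iff.1 (hF hY).1).resolve_left (hF hY).2)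
    · have hF' : ↑(F.erase D) ⊆ A \ {Z} := fun Y hY => by
        have := hF (Finset.mem_of_mem_erase hY)
        exact ⟨(mem_insert_iff.1 this.1).resolve_left (Finset.ne_of_mem_erase hY), this.2⟩
      refine (h Z hZ _ ⟨_, hF', rfl⟩).mono ?_
      rintro x ⟨⟨hxZ, hxF'⟩, hxD⟩
      refine ⟨hxZ, fun hxF => hxF' ?_⟩
      obtain ⟨Y, hY, hxY⟩ := mem_iUnion₂.1 hxF
      exact mem_iUnion₂.2 ⟨Y, Finset.mem_erase.2 ⟨fun h => hxD (h ▸ hxY), hY⟩, hxY⟩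
  exact hDA (hA.2 _ hindep (subset_insert D A) ▸ mem_insert D A)

end IdealIndependent

lemma exists_ultrafilter_of_decides {α : Type*} {B : Set (Set α)} (hne : B.Nonempty)
    (hinter : ∀ b₁ ∈ B, ∀ b₂ ∈ B, b₁ ∩ b₂ ∈ B) (hinf : ∀ b ∈ B, b.Infinite)
    (hdec : ∀ S, (∃ b ∈ B, (b \ S).Finite) ∨ ∃ b ∈ B, (b ∩ S).Finite) :
    ∃ U : Ultrafilter α, ∀ S, S ∈ U ↔ ∃ b ∈ B, (b \ S).Finite := by
  let 𝓕 : Filter α :=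
    { sets := {S | ∃ b ∈ B, (b \ S).Finite}
      univ_sets := let ⟨b, hb⟩ := hne; ⟨b, hb, by simp⟩
      sets_of_superset := fun ⟨b, hb, hbS⟩ hST =>
        ⟨b, hb, hbS.subset (sdiff_subset_sdiff_right hST)⟩
      inter_sets := by
        rintro S T ⟨b₁, hb₁, h₁⟩ ⟨b₂, hb₂, h₂⟩
        refine ⟨b₁ ∩ b₂, hinter b₁ hb₁ b₂ hb₂, (h₁.union h₂).subset ?_⟩
        rintro x ⟨⟨hx₁, hx₂⟩, hx⟩
        by_cases hS : x ∈ S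
        · exact Or.inr ⟨hx₂, fun hT => hx ⟨hS, hT⟩⟩
        · exact Or.inl ⟨hx₁, hS⟩ }
  have hcompl : ∀ S, Sᶜ ∉ 𝓕 ↔ S ∈ 𝓕 := by
    refine fun S => ⟨fun h => (hdec S).resolve_right fun ⟨b, hb, hbS⟩ => h ⟨b, hb, ?_⟩, ?_⟩
    · rwa [sdiff_compl]
    · rintro ⟨b₁, hb₁, h₁⟩ ⟨b₂, hb₂, h₂⟩
      refine hinf _ (hinter b₁ hb₁ b₂ hb₂) ((h₁.union h₂).subset fun x ⟨hx₁, hx₂⟩ => ?_)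
      by_cases hx : x ∈ S
      · exact Or.inr ⟨hx₂, not_not.2 hx⟩
      · exact Or.inl ⟨hx₁, hx⟩
  exact ⟨.ofComplNotMemIff 𝓕 hcompl, fun S => Iff.rfl⟩

lemma uNum_le_mk {U : Ultrafilter ℕ} {B : Set (Set ℕ)} (hU : ∀ S : Set ℕ, S.Finite → S ∉ U)
    (hBU : ∀ b ∈ B, b ∈ U) (hbase : ∀ S ∈ U, ∃ b ∈ B, (b \ S).Finite) : uNum ≤ #B :=
  csInf_le' ⟨U, B, hU, hBU, hbase, rfl⟩

lemma uNum_le_mk_of_decides {B : Set (Set ℕ)} (hne : B.Nonempty)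
    (hinter : ∀ b₁ ∈ B, ∀ b₂ ∈ B, b₁ ∩ b₂ ∈ B) (hinf : ∀ b ∈ B, b.Infinite)
    (hdec : ∀ S, (∃ b ∈ B, (b \ S).Finite) ∨ ∃ b ∈ B, (b ∩ S).Finite) : uNum ≤ #B := by
  obtain ⟨U, hU⟩ := exists_ultrafilter_of_decides hne hinter hinf hdec
  refine uNum_le_mk (U := U) (fun S hS hSU => ?_) (fun b hb => (hU b).2 ⟨b, hb, by simp⟩)
    fun S hS => (hU S).1 hS
  obtain ⟨b, hb, hbS⟩ := (hU S).1 hSU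
  exact hinf b hb ((hbS.union hS).subset (by simp))

lemma uNum_le_continuum : uNum ≤ 𝔠 := by
  refine (uNum_le_mk (U := Filter.hyperfilter ℕ) (B := {S | S ∈ Filter.hyperfilter ℕ})
    (fun S hS => Filter.notMem_hyperfilter_of_finite hS) (fun b hb => hb)
    fun S hS => ⟨S, hS, by simp⟩).trans ?_
  exact (mk_set_le _).trans_eq mk_set_nat

def prefixCode (f : ℕ → Bool) (n : ℕ) : ℕ :=
  Encodable.encode ((List.range n).map f)

lemma prefixCode_eq_prefixCode_iff {f g : ℕ → Bool} {n m : ℕ} :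
    prefixCode f n = prefixCode g m ↔ n = m ∧ ∀ i < n, f i = g i := by
  simp only [prefixCode, Encodable.encode_inj]
  constructor
  · intro h
    obtain rfl : n = m := by simpa using congrArg List.length h
    simpa using List.map_inj_left.1 h
  · rintro ⟨rfl, h⟩
    exact List.map_inj_left.2 fun i hi => h i (List.mem_range.1 hi)

lemma prefixCode_injective (f : ℕ → Bool) : Function.Injective (prefixCode f) :=
  fun _ _ h => (prefixCode_eq_prefixCode_iff.1 h).1

lemma finite_range_prefixCode_inter {f g : ℕ → Bool} (hfg : f ≠ g) :
    (range (prefixCode f) ∩ range (prefixCode g)).Finite := by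
  obtain ⟨i, hi⟩ := Function.ne_iff.1 hfg
  refine ((finite_Iic i).image (prefixCode f)).subset ?_
  rintro _ ⟨⟨n, rfl⟩, m, hm⟩
  have hagree := prefixCode_eq_prefixCode_iff.1 hm.symm
  exact ⟨n, not_lt.1 fun hin => hi (hagree.2 i hin), rfl⟩

def SplitsGenSets (A : Set (Set ℕ)) (Y C : Set ℕ) : Prop :=
  ∀ b ∈ genSets A Y, (b ∩ C).Infinite ∧ (b \ C).Infinite

def splitPiece (X C : ℕ → Set ℕ) (n : ℕ) : Set ℕ :=
  (X n ∩ C n) \ ⋃ k < n, X k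

def splitPieceUnion (X C : ℕ → Set ℕ) (I : Set ℕ) : Set ℕ :=
  ⋃ n ∈ I, splitPiece X C n

section splitPiece

variable {A : Set (Set ℕ)} {X C : ℕ → Set ℕ} {n : ℕ}

lemma splitPiece_subset : splitPiece X C n ⊆ X n ∩ C n :=
  sdiff_subset

lemma disjoint_splitPiece_of_lt {k : ℕ} (hkn : k < n) : Disjoint (splitPiece X C n) (X k) :=
  disjoint_left.2 fun _ hx hxk => hx.2 (mem_biUnion hkn hxk)

lemma eq_of_mem_splitPiece {m x : ℕ} (hn : x ∈ splitPiece X C n) (hm : x ∈ splitPiece X C m) :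
    n = m := by
  by_contra hne
  rcases Nat.lt_or_gt_of_ne hne with h | h
  · exact disjoint_left.1 (disjoint_splitPiece_of_lt h) hm (splitPiece_subset hn).1
  · exact disjoint_left.1 (disjoint_splitPiece_of_lt h) hn (splitPiece_subset hm).1

lemma splitPieceUnion_inter_subset (I J : Set ℕ) :
    splitPieceUnion X C I ∩ splitPieceUnion X C J ⊆ ⋃ n ∈ I ∩ J, X n := by
  rintro x ⟨hxI, hxJ⟩
  obtain ⟨n, hn, hxn⟩ := mem_iUnion₂.1 hxI
  obtain ⟨m, hm, hxm⟩ := mem_iUnion₂.1 hxJ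
  obtain rfl := eq_of_mem_splitPiece hxn hxm
  exact mem_iUnion₂.2 ⟨n, ⟨hn, hm⟩, (splitPiece_subset hxn).1⟩

lemma diff_iUnion_lt_mem_genSets (hXA : ∀ n, X n ∈ A) (hXinj : Function.Injective X)
    {b : Set ℕ} (hb : b ∈ genSets A (X n)) : b \ ⋃ k < n, X k ∈ genSets A (X n) := by
  have hH : ↑((Finset.range n).image X) ⊆ A \ {X n} := by
    simpa [subset_def] using fun k hk => ⟨hXA k, hXinj.ne hk.ne⟩
  simpa [Finset.set_biUnion_finset_image] using diff_biUnion_mem_genSets hb hH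

lemma infinite_splitPiece_inter (hXA : ∀ n, X n ∈ A) (hXinj : Function.Injective X)
    (hsplit : SplitsGenSets A (X n) (C n)) {b : Set ℕ} (hb : b ∈ genSets A (X n)) :
    (splitPiece X C n ∩ b).Infinite := by
  refine (hsplit _ (diff_iUnion_lt_mem_genSets hXA hXinj hb)).1.mono ?_
  rintro x ⟨⟨hxb, hxlt⟩, hxC⟩
  exact ⟨⟨⟨genSets_subset hb hxb, hxC⟩, hxlt⟩, hxb⟩

lemma infinite_diff_splitPieceUnion (hXA : ∀ n, X n ∈ A) (hXinj : Function.Injective X)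
    (hsplit : SplitsGenSets A (X n) (C n)) {b : Set ℕ} (hb : b ∈ genSets A (X n)) (I : Set ℕ) :
    (b \ splitPieceUnion X C I).Infinite := by
  refine (hsplit _ (diff_iUnion_lt_mem_genSets hXA hXinj hb)).2.mono ?_
  rintro x ⟨⟨hxb, hxlt⟩, hxC⟩
  refine ⟨hxb, fun hxI => ?_⟩
  obtain ⟨m, -, hxm⟩ := mem_iUnion₂.1 hxI
  rcases lt_trichotomy m n with h | rfl | h
  · exact hxlt (mem_biUnion h (splitPiece_subset hxm).1)
  · exact hxC (splitPiece_subset hxm).2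
  · exact disjoint_left.1 (disjoint_splitPiece_of_lt h) hxm (genSets_subset hb hxb)

lemma infinite_splitPieceUnion_diff (hXA : ∀ n, X n ∈ A) (hXinj : Function.Injective X)
    (hsplit : ∀ n, SplitsGenSets A (X n) (C n)) {I : Set ℕ} (hI : I.Infinite)
    {G : Finset (Set ℕ)} (hG : ↑G ⊆ A) : (splitPieceUnion X C I \ ⋃ Y ∈ G, Y).Infinite := by
  obtain ⟨_, ⟨n, hnI, rfl⟩, hnG⟩ := ((hI.image hXinj.injOn).sdiff G.finite_toSet).nonempty
  have hb : X n \ ⋃ Y ∈ G, Y ∈ genSets A (X n) :=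
    ⟨G, fun Y hY => ⟨hG hY, fun h => hnG (h ▸ hY)⟩, rfl⟩
  refine (infinite_splitPiece_inter hXA hXinj (hsplit n) hb).mono ?_
  rintro x ⟨hxn, -, hxG⟩
  exact ⟨mem_biUnion hnI hxn, hxG⟩

end splitPiece

lemma continuum_le_mk_of_splitsGenSets {A : Set (Set ℕ)} (hA : MaximalIdealIndependent A)
    (hinf : A.Infinite) (hsplit : ∀ Y ∈ A, ∃ C, SplitsGenSets A Y C) : 𝔠 ≤ #A := by
  let X : ℕ → Set ℕ := fun n => hinf.natEmbedding A n
  have hXA : ∀ n, X n ∈ A := fun n => (hinf.natEmbedding A n).2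
  have hXinj : Function.Injective X :=
    Subtype.val_injective.comp (hinf.natEmbedding A).injective
  choose C hC using fun n => hsplit (X n) (hXA n)
  let D : (ℕ → Bool) → Set ℕ := fun f => splitPieceUnion X C (range (prefixCode f))
  have hZ : ∀ f, ∃ Z ∈ A, ∃ b ∈ genSets A Z, (b \ D f).Finite := fun f =>
    hA.exists_genSets_diff_finite fun _ hG => infinite_splitPieceUnion_diff hXA hXinj hC
      (infinite_range_of_injective (prefixCode_injective f)) hG
  choose Z hZA b hb hbD using hZ
  have hZX : ∀ f n, Z f ≠ X n := fun f n h =>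
    infinite_diff_splitPieceUnion hXA hXinj (hC n) (h ▸ hb f) _ (hbD f)
  have hZinj : Function.Injective Z := by
    intro f g hfg
    by_contra hne
    let H := (finite_range_prefixCode_inter hne).toFinset.image X
    have hH : ↑H ⊆ A \ {Z f} := fun Y hY => by
      obtain ⟨n, -, rfl⟩ := Finset.mem_image.1 hY
      exact ⟨hXA n, (hZX f n).symm⟩
    refine hA.1.not_inter_subset_biUnion (hZA f) (hb f) (hfg ▸ hb g) (hbD f) (hbD g) hH
      ((splitPieceUnion_inter_subset _ _).trans (iUnion₂_subset fun n hn => ?_))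
    exact subset_biUnion_of_mem (u := id)
      (Finset.mem_image_of_mem X ((Finite.mem_toFinset _).2 hn))
  calc 𝔠 = #(ℕ → Bool) := by rw [← power_def, mk_bool, mk_nat, two_power_aleph0]
    _ ≤ #A := mk_le_of_injective (f := fun f => ⟨Z f, hZA f⟩)
      fun f g h => hZinj (congrArg Subtype.val h)

/-- 𝔲 ≤ 𝔰ₘₘ. -/
theorem stmt11 : uNum ≤ smm := by
  obtain ⟨A₀, hA₀inf, hA₀max⟩ := exists_infinite_maximalIdealIndependent
  refine le_csInf ⟨_, A₀, hA₀inf, hA₀max, rfl⟩ ?_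
  rintro _ ⟨A, hinf, hA, rfl⟩
  by_cases hdec : ∃ X ∈ A, ∀ S, (∃ b ∈ genSets A X, (b \ S).Finite) ∨
      ∃ b ∈ genSets A X, (b ∩ S).Finite
  · obtain ⟨X, hX, hdec⟩ := hdec
    exact (uNum_le_mk_of_decides ⟨X, self_mem_genSets⟩ (fun _ h₁ _ h₂ => inter_mem_genSets h₁ h₂)
      (fun _ => hA.1.infinite_of_mem_genSets hX) hdec).trans (mk_genSets_le hinf)
  · push Not at hdec
    refine uNum_le_continuum.trans (continuum_le_mk_of_splitsGenSets hA hinf fun X hX => ?_)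
    obtain ⟨C, hC₁, hC₂⟩ := hdec X hX
    exact ⟨C, fun b hb => ⟨hC₂ b hb, hC₁ b hb⟩⟩
end

section
/- There exists a maximal ideal independent family $\mathcal{A}$ on $\omega$ such that for every $A \in \mathcal{A}$ the complemented filter $\mathcal{F}(\mathcal{A}, A)$ is an ultrafilter. -/
/-!
By a transfinite recursion of length `𝔠` we build a family of pairs `(X, U_X)`, where `U_X` is a
nonprincipal ultrafilter containing `X` and no other member of the family. Such a family `𝒜` is
ideal independent, with `U_X ≤ 𝓕(𝒜, X)`. Every set `s` is dealt with at cofinally many stages: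
if `s` lies in no `U_X` yet, a new member is added that either contains `s` or is almost covered by
`s` and finitely many old members, so `s` cannot be added to the final family. For `s = X \ S`
with `S ∈ U_X` the new member `c ⊇ X \ S` gives `X \ c ⊆ S`, whence `𝓕(𝒜, X) = U_X`.
New members are built from the branches of an almost disjoint family of size `𝔠`: fewer than `𝔠`
of them are used before any stage, and the unused ones carry the new ultrafilters.
-/

open Set Filter

section Filters

variable {α : Type*}

theorem infinite_of_mem_of_le_cofinite {f : Filter α} [f.NeBot] (hf : f ≤ cofinite) {s : Set α}
    (hs : s ∈ f) : s.Infinite :=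
  frequently_cofinite_mem_iff_infinite.1 ((Eventually.frequently hs).filter_mono hf)

theorem exists_ultrafilter_avoiding {D : Set α} {K : Set (Set α)}
    (h : ∀ B : Finset (Set α), ↑B ⊆ K → (D \ ⋃ Y ∈ B, Y).Infinite) :
    ∃ U : Ultrafilter α, D ∈ U ∧ (U : Filter α) ≤ cofinite ∧ ∀ Y ∈ K, Y ∉ U := by
  classical
  -- dual to the ideal of all `t` with `D ∩ t` almost covered by finitely many members of `K`
  let F : Filter α := comk (fun t => ∃ B : Finset (Set α), ↑B ⊆ K ∧ ((D ∩ t) \ ⋃ Y ∈ B, Y).Finite)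
    ⟨∅, by simp, by simp⟩
    (fun _ ⟨B, hB, hfin⟩ _ hst => ⟨B, hB, hfin.subset (by gcongr)⟩)
    (fun _ ⟨B, hB, hs⟩ _ ⟨C, hC, ht⟩ => ⟨B ∪ C, by simpa using union_subset hB hC,
      (hs.union ht).subset (by intro x; simp only [Finset.set_biUnion_union]; grind)⟩)
  have : F.NeBot := ⟨fun hF => by
    obtain ⟨B, hB, hfin⟩ := mem_comk.1 (empty_mem_iff_bot.2 hF)
    exact h B hB (by simpa using hfin)⟩
  refine ⟨Ultrafilter.of F, Ultrafilter.of_le F ⟨∅, by simp, by simp⟩,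
    (Ultrafilter.of_le F).trans fun s hs => ⟨∅, by simp, ?_⟩, fun Y hY => ?_⟩
  · exact (mem_cofinite.1 hs).subset fun x hx => hx.1.2
  · refine Ultrafilter.compl_mem_iff_notMem.1 (Ultrafilter.of_le F ⟨{Y}, by simpa using hY, ?_⟩)
    simp [sdiff_eq, inter_assoc]

end Filters

theorem IdealIndependent.mono {A B : Set (Set ℕ)} (hB : IdealIndependent B) (hAB : A ⊆ B) :
    IdealIndependent A :=
  ⟨fun X hX => hB.1 X (hAB hX),
    fun X hX F hF => hB.2 X (hAB hX) F (hF.trans (sdiff_subset_sdiff_left hAB))⟩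

theorem MaximalIdealIndependent.of_not_insert {A : Set (Set ℕ)} (hA : IdealIndependent A)
    (h : ∀ Y ∉ A, ¬IdealIndependent (insert Y A)) : MaximalIdealIndependent A :=
  ⟨hA, fun _ hB hAB => Subset.antisymm
    (fun Y hYB => by_contra fun hY => h Y hY (hB.mono (insert_subset hYB hAB))) hAB⟩

theorem ultrafilter_le_complFilter {A : Set (Set ℕ)} {X : Set ℕ} {U : Ultrafilter ℕ}
    (hX : X ∈ U) (hA : ∀ Y ∈ A, Y ≠ X → Y ∉ U) : (U : Filter ℕ) ≤ complFilter A X := by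
  rw [complFilter, le_generate_iff]
  rintro _ ⟨F, hF, rfl⟩
  rw [sdiff_eq, compl_iUnion₂]
  exact inter_mem hX <| (biInter_finset_mem F).2 fun Y hY =>
    Ultrafilter.compl_mem_iff_notMem.2 (hA Y (hF hY).1 (hF hY).2)

theorem complFilter_le_ultrafilter {A : Set (Set ℕ)} {X : Set ℕ} {U : Ultrafilter ℕ}
    (h : ∀ s ∈ U, ∃ c ∈ A, c ≠ X ∧ X \ c ⊆ s) : complFilter A X ≤ U := by
  intro s hs
  obtain ⟨c, hcA, hcX, hsub⟩ := h s hs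
  exact mem_of_superset (mem_generate_of_mem ⟨{c}, by simpa using ⟨hcA, hcX⟩, by simp⟩) hsub

theorem idealIndependent_of_ultrafilters {A : Set (Set ℕ)}
    (h : ∀ X ∈ A, ∃ U : Ultrafilter ℕ, X ∈ U ∧ (U : Filter ℕ) ≤ cofinite ∧
      ∀ Y ∈ A, Y ≠ X → Y ∉ U) :
    IdealIndependent A := by
  refine ⟨fun X hX => ?_, fun X hX F hF => ?_⟩ <;> obtain ⟨U, hXU, hcof, hsep⟩ := h X hX
  · exact infinite_of_mem_of_le_cofinite hcof hXU
  · exact infinite_of_mem_of_le_cofinite hcof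
      (ultrafilter_le_complFilter hXU hsep (mem_generate_of_mem ⟨F, hF, rfl⟩))

namespace ComplementedUltrafilters

open Cardinal

open Classical in
noncomputable def branchCode (s : Set ℕ) (n : ℕ) : ℕ :=
  Encodable.encode (List.ofFn fun k : Fin n => decide ((k : ℕ) ∈ s))

/-- The branch of `s` in the binary tree, coded in `ℕ`. -/
def adSet (s : Set ℕ) : Set ℕ := range (branchCode s)

theorem branchCode_eq {s t : Set ℕ} {n m : ℕ} (h : branchCode s n = branchCode t m) :
    n = m ∧ ∀ k < n, (k ∈ s ↔ k ∈ t) := by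
  have h' := Encodable.encode_injective h
  obtain rfl : n = m := by simpa using congrArg List.length h'
  exact ⟨rfl, fun k hk => decide_eq_decide.1 (congrFun (List.ofFn_injective h') ⟨k, hk⟩)⟩

theorem adSet_infinite (s : Set ℕ) : (adSet s).Infinite :=
  infinite_range_of_injective fun _ _ h => (branchCode_eq h).1

theorem adSet_inter_finite {s t : Set ℕ} (hst : s ≠ t) : (adSet s ∩ adSet t).Finite := by
  obtain ⟨k, hk⟩ : ∃ k, ¬(k ∈ s ↔ k ∈ t) := by
    by_contra! h
    exact hst (ext h)
  refine ((finite_Iic k).image (branchCode s)).subset ?_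
  rintro _ ⟨⟨n, rfl⟩, m, hm⟩
  obtain ⟨rfl, hst⟩ := branchCode_eq hm.symm
  exact ⟨n, not_lt.1 fun hkn => hk (hst k hkn), rfl⟩

/-- A member `carrier = base ∪ adSet idx` of the family under construction, together with the
ultrafilter that is to become its complemented filter. -/
structure Piece where
  base : Set ℕ
  idx : Set ℕ
  uf : Ultrafilter ℕ

def Piece.carrier (p : Piece) : Set ℕ := p.base ∪ adSet p.idx

/-- The last two fields say that the branches `adSet ι` with unused index `ι` are still available
for new members. -/
structure Admissible (S : Set Piece) : Prop where
  carrier_mem : ∀ p ∈ S, p.carrier ∈ p.uf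
  le_cofinite : ∀ p ∈ S, (p.uf : Filter ℕ) ≤ cofinite
  carrier_notMem : ∀ p ∈ S, ∀ q ∈ S, p ≠ q → q.carrier ∉ p.uf
  adSet_notMem : ∀ p ∈ S, ∀ ι ∉ Piece.idx '' S, adSet ι ∉ p.uf
  adSet_diff_infinite : ∀ ι ∉ Piece.idx '' S, ∀ B : Finset (Set ℕ), ↑B ⊆ Piece.carrier '' S →
    (adSet ι \ ⋃ Y ∈ B, Y).Infinite

structure FreshPiece (S : Set Piece) (p : Piece) : Prop where
  idx_notMem : p.idx ∉ Piece.idx '' S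
  base_notMem : ∀ q ∈ S, p.base ∉ q.uf
  adSet_diff_infinite : ∀ ι ∉ Piece.idx '' S, ∀ B : Finset (Set ℕ), ↑B ⊆ Piece.carrier '' S →
    (adSet ι \ ((⋃ Y ∈ B, Y) ∪ p.base)).Infinite
  adSet_mem : adSet p.idx ∈ p.uf
  le_cofinite : (p.uf : Filter ℕ) ≤ cofinite
  carrier_notMem : ∀ q ∈ S, q.carrier ∉ p.uf

namespace Admissible

variable {S : Set Piece}

theorem carrier_ne (hS : Admissible S) {p q : Piece} (hp : p ∈ S) (hq : q ∈ S) (hpq : p ≠ q) :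
    q.carrier ≠ p.carrier :=
  fun h => hS.carrier_notMem p hp q hq hpq (h ▸ hS.carrier_mem p hp)

theorem notMem_of_ne_carrier (hS : Admissible S) {p : Piece} (hp : p ∈ S) {Y : Set ℕ}
    (hY : Y ∈ Piece.carrier '' S) (hYp : Y ≠ p.carrier) : Y ∉ p.uf := by
  obtain ⟨q, hq, rfl⟩ := hY
  exact hS.carrier_notMem p hp q hq fun h => hYp (h ▸ rfl)

theorem iUnion {I : Type*} {S : I → Set Piece} (hdir : Directed (· ⊆ ·) S)
    (hS : ∀ k, Admissible (S k)) : Admissible (⋃ k, S k) := by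
  have idx_mono (k) {ι} (hι : ι ∉ Piece.idx '' ⋃ k, S k) : ι ∉ Piece.idx '' S k :=
    fun h => hι (image_mono (subset_iUnion S k) h)
  refine ⟨fun p hp => ?_, fun p hp => ?_, fun p hp q hq hpq => ?_, fun p hp ι hι => ?_,
    fun ι hι B hB => ?_⟩
  · obtain ⟨k, hk⟩ := mem_iUnion.1 hp
    exact (hS k).carrier_mem p hk
  · obtain ⟨k, hk⟩ := mem_iUnion.1 hp
    exact (hS k).le_cofinite p hk
  · obtain ⟨k, hk⟩ := mem_iUnion.1 hp
    obtain ⟨l, hl⟩ := mem_iUnion.1 hq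
    obtain ⟨m, hkm, hlm⟩ := hdir k l
    exact (hS m).carrier_notMem p (hkm hk) q (hlm hl) hpq
  · obtain ⟨k, hk⟩ := mem_iUnion.1 hp
    exact (hS k).adSet_notMem p hk ι (idx_mono k hι)
  · rcases isEmpty_or_nonempty I with _ | _
    · obtain rfl : B = ∅ := by simpa using hB
      simpa using adSet_infinite ι
    rw [image_iUnion] at hB
    obtain ⟨k, hk⟩ := (hdir.mono_comp _ fun _ _ h => image_mono h)
      |>.exists_mem_subset_of_finset_subset_biUnion hB
    exact (hS k).adSet_diff_infinite ι (idx_mono k hι) B hk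

end Admissible

theorem FreshPiece.ne {S : Set Piece} {p q : Piece} (hp : FreshPiece S p) (hq : q ∈ S) : q ≠ p :=
  fun h => hp.idx_notMem ⟨q, hq, congrArg Piece.idx h⟩

theorem FreshPiece.adSet_diff_infinite_insert {S : Set Piece} {p : Piece} (hp : FreshPiece S p)
    {ι : Set ℕ} (hιp : ι ≠ p.idx) (hιS : ι ∉ Piece.idx '' S) {B : Finset (Set ℕ)}
    (hB : ↑B ⊆ Piece.carrier '' insert p S) : (adSet ι \ ⋃ Y ∈ B, Y).Infinite := by
  classical
  have hB' : ↑(B.erase p.carrier) ⊆ Piece.carrier '' S := fun Y hY => by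
    have := hB (Finset.mem_of_mem_erase hY)
    rw [image_insert_eq] at this
    exact this.resolve_left (Finset.ne_of_mem_erase hY)
  -- outside `p.base`, the new member meets `adSet ι` only in the finite set `adSet ι ∩ adSet p.idx`
  set s := adSet ι \ ((⋃ Y ∈ B.erase p.carrier, Y) ∪ p.base)
  have hfin : (s ∩ adSet p.idx).Finite :=
    (adSet_inter_finite hιp).subset (inter_subset_inter_left _ sdiff_subset)
  refine ((hp.adSet_diff_infinite ι hιS _ hB').sdiff hfin).mono ?_
  rintro x ⟨⟨hxι, hxB'⟩, hxp⟩
  refine ⟨hxι, fun hxB => ?_⟩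
  obtain ⟨Y, hY, hxY⟩ := mem_iUnion₂.1 hxB
  by_cases hYp : Y = p.carrier
  · subst hYp
    exact hxY.elim (fun h => hxB' (Or.inr h)) fun h => hxp ⟨⟨hxι, hxB'⟩, h⟩
  · exact hxB' (Or.inl (mem_iUnion₂.2 ⟨Y, Finset.mem_erase.2 ⟨hYp, hY⟩, hxY⟩))

theorem FreshPiece.admissible_insert {S : Set Piece} {p : Piece} (hp : FreshPiece S p)
    (hS : Admissible S) : Admissible (insert p S) := by
  classical
  have hidx {ι} (hι : ι ∉ Piece.idx '' insert p S) : ι ≠ p.idx ∧ ι ∉ Piece.idx '' S := by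
    simpa [image_insert_eq, not_or] using hι
  refine ⟨?_, ?_, ?_, ?_, fun ι hι B hB => ?_⟩
  · rintro q (rfl | hq)
    · exact mem_of_superset hp.adSet_mem subset_union_right
    · exact hS.carrier_mem q hq
  · rintro q (rfl | hq)
    · exact hp.le_cofinite
    · exact hS.le_cofinite q hq
  · rintro q (rfl | hq) r (rfl | hr) hqr
    · exact absurd rfl hqr
    · exact hp.carrier_notMem r hr
    · exact fun h => (Ultrafilter.union_mem_iff.1 h).elim (hp.base_notMem q hq)
        (hS.adSet_notMem q hq _ hp.idx_notMem)
    · exact hS.carrier_notMem q hq r hr hqr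
  · rintro q (rfl | hq) ι hι
    · exact fun h => infinite_of_mem_of_le_cofinite hp.le_cofinite
        (inter_mem h hp.adSet_mem) (adSet_inter_finite (hidx hι).1)
    · exact hS.adSet_notMem q hq ι (hidx hι).2
  · exact hp.adSet_diff_infinite_insert (hidx hι).1 (hidx hι).2 hB

theorem exists_freshPiece {S : Set Piece} {Z ι : Set ℕ} (hS : Admissible S)
    (hι : ι ∉ Piece.idx '' S) (hZ : ∀ q ∈ S, Z ∉ q.uf)
    (hdiff : ∀ κ ∉ Piece.idx '' S, ∀ B : Finset (Set ℕ), ↑B ⊆ Piece.carrier '' S →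
      (adSet κ \ ((⋃ Y ∈ B, Y) ∪ Z)).Infinite) :
    ∃ U, FreshPiece S ⟨Z, ι, U⟩ := by
  obtain ⟨U, hιU, hcof, hK⟩ := exists_ultrafilter_avoiding (hS.adSet_diff_infinite ι hι)
  exact ⟨U, hι, hZ, hdiff, hιU, hcof, fun q hq => hK _ (mem_image_of_mem _ hq)⟩

/-- Adding `p` to `S` prevents `Z` from being added to the family: either `Z` is the base of `p`,
or `p` is a bare branch almost covered by `Z` together with finitely many old members. -/
def Handles (Z : Set ℕ) (S : Set Piece) (p : Piece) : Prop :=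
  p.base = Z ∨ p.base = ∅ ∧ ∃ B : Finset (Set ℕ), ↑B ⊆ Piece.carrier '' S ∧
    (adSet p.idx \ ((⋃ Y ∈ B, Y) ∪ Z)).Finite

theorem exists_freshPiece_handles {S : Set Piece} {Z : Set ℕ} (hS : Admissible S)
    (hcard : #S < 𝔠) (hZ : ∀ q ∈ S, Z ∉ q.uf) : ∃ p, FreshPiece S p ∧ Handles Z S p := by
  by_cases hcov : ∃ ι ∉ Piece.idx '' S, ∃ B : Finset (Set ℕ), ↑B ⊆ Piece.carrier '' S ∧
      (adSet ι \ ((⋃ Y ∈ B, Y) ∪ Z)).Finite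
  · obtain ⟨ι, hι, hB⟩ := hcov
    obtain ⟨U, hU⟩ := exists_freshPiece hS hι (fun _ _ => Ultrafilter.empty_notMem)
      (by simpa using hS.adSet_diff_infinite)
    exact ⟨_, hU, Or.inr ⟨rfl, hB⟩⟩
  · push Not at hcov
    obtain ⟨ι, hι⟩ : (Piece.idx '' S)ᶜ.Nonempty :=
      compl_nonempty_of_mk_lt_mk (mk_image_le.trans_lt (hcard.trans_eq mk_set_nat.symm))
    obtain ⟨U, hU⟩ := exists_freshPiece hS hι hZ hcov
    exact ⟨_, hU, Or.inl rfl⟩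

/-- Stages are indexed by the initial ordinal of `𝔠`, so that each stage has fewer than `𝔠`
predecessors. -/
abbrev Stage : Type := (ord 𝔠).ToType

theorem mk_Iic_lt (i : Stage) : #(Iic i) < 𝔠 := by
  rw [← Iio_insert]
  exact mk_insert_le.trans_lt (add_lt_of_lt aleph0_le_continuum (by simpa using mk_Iio_lt i)
    (one_lt_aleph0.trans_le aleph0_le_continuum))

noncomputable def stageEquiv : Stage ≃ Set ℕ × Stage :=
  Classical.choice (Cardinal.eq.1 (by simp [mk_prod]))

noncomputable def task (i : Stage) : Set ℕ := (stageEquiv i).1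

theorem task_surjective : Function.Surjective task := fun Z =>
  ⟨stageEquiv.symm (Z, (mk_ne_zero_iff.1 (by simp [continuum_ne_zero])).some), by simp [task]⟩

theorem exists_lt_task_eq (Z : Set ℕ) (i : Stage) : ∃ j, i < j ∧ task j = Z := by
  by_contra! h
  let f : Stage → Iic i := fun k =>
    ⟨stageEquiv.symm (Z, k), not_lt.1 fun hlt => h _ hlt (by simp [task])⟩
  have hf : Function.Injective f := fun k k' hkk' =>
    (Prod.ext_iff.1 (stageEquiv.symm.injective (congrArg Subtype.val hkk'))).2
  exact ((mk_le_of_injective hf).trans_lt (mk_Iic_lt i)).ne (by simp)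

open Classical in
noncomputable def step (Z : Set ℕ) (S : Set Piece) : Option Piece :=
  if h : ∃ p, FreshPiece S p ∧ Handles Z S p then some h.choose else none

theorem step_spec {Z : Set ℕ} {S : Set Piece} {p : Piece} (h : step Z S = some p) :
    FreshPiece S p ∧ Handles Z S p := by
  unfold step at h
  split_ifs at h with hex
  exact Option.some_injective _ h ▸ hex.choose_spec

theorem exists_step_eq_some {Z : Set ℕ} {S : Set Piece} (h : ∃ p, FreshPiece S p ∧ Handles Z S p) :
    ∃ p, step Z S = some p :=
  ⟨_, dif_pos h⟩

noncomputable def newPiece : Stage → Option Piece :=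
  wellFounded_lt.fix fun i rec => step (task i) {p | ∃ j, ∃ h : j < i, rec j h = some p}

def before (i : Stage) : Set Piece := {p | ∃ j < i, newPiece j = some p}

def upto (i : Stage) : Set Piece := {p | ∃ j ≤ i, newPiece j = some p}

def built : Set Piece := {p | ∃ j, newPiece j = some p}

theorem newPiece_eq (i : Stage) : newPiece i = step (task i) (before i) := by
  rw [newPiece, WellFounded.fix_eq]
  simp only [before, exists_prop]
  rfl

theorem upto_mono : Monotone upto := fun _ _ hii' _ ⟨j, hj, hp⟩ => ⟨j, hj.trans hii', hp⟩

theorem before_eq_iUnion (i : Stage) : before i = ⋃ j : Iio i, upto j := by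
  ext p
  simp only [before, upto, mem_ofPred_eq, mem_iUnion, Subtype.exists, mem_Iio]
  exact ⟨fun ⟨j, hj, hp⟩ => ⟨j, hj, j, le_rfl, hp⟩,
    fun ⟨j, hj, k, hkj, hp⟩ => ⟨k, hkj.trans_lt hj, hp⟩⟩

theorem built_eq_iUnion : built = ⋃ i, upto i := by
  ext p
  simp only [built, upto, mem_ofPred_eq, mem_iUnion]
  exact ⟨fun ⟨j, hp⟩ => ⟨j, j, le_rfl, hp⟩, fun ⟨_, j, _, hp⟩ => ⟨j, hp⟩⟩

theorem upto_eq (i : Stage) : upto i = before i ∪ {p | newPiece i = some p} := by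
  ext p
  simp only [upto, before, mem_union, mem_ofPred_eq, le_iff_lt_or_eq]
  grind

theorem before_subset_built (i : Stage) : before i ⊆ built := fun _ ⟨j, _, hp⟩ => ⟨j, hp⟩

theorem admissible_before_of {i : Stage} (h : ∀ j < i, Admissible (upto j)) :
    Admissible (before i) := by
  rw [before_eq_iUnion]
  exact Admissible.iUnion (upto_mono.comp (Subtype.mono_coe _)).directed_le fun j => h j j.2

theorem admissible_upto (i : Stage) : Admissible (upto i) := by
  induction i using WellFoundedLT.induction with
  | _ i ih =>
    rw [upto_eq]
    cases h : newPiece i with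
    | none => simpa using admissible_before_of ih
    | some p =>
      rw [newPiece_eq] at h
      simpa [union_singleton] using (step_spec h).1.admissible_insert (admissible_before_of ih)

theorem admissible_before (i : Stage) : Admissible (before i) :=
  admissible_before_of fun j _ => admissible_upto j

theorem admissible_built : Admissible built := by
  rw [built_eq_iUnion]
  exact Admissible.iUnion upto_mono.directed_le admissible_upto

theorem mk_before_lt (i : Stage) : #(before i) < 𝔠 := by
  have hsub : some '' before i ⊆ range fun j : Iio i => newPiece j :=
    fun _ ⟨p, ⟨j, hj, hp⟩, hq⟩ => ⟨⟨j, hj⟩, hp.trans hq⟩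
  calc #(before i) = #(some '' before i) := (mk_image_eq (Option.some_injective _)).symm
    _ ≤ #(Iio i) := (mk_le_mk_of_subset hsub).trans mk_range_le
    _ < 𝔠 := by simpa using mk_Iio_lt i

theorem exists_newPiece_handles {j : Stage} (hj : ∀ q ∈ before j, task j ∉ q.uf) :
    ∃ p, newPiece j = some p ∧ FreshPiece (before j) p ∧ Handles (task j) (before j) p := by
  obtain ⟨p, hp⟩ := exists_step_eq_some
    (exists_freshPiece_handles (admissible_before j) (mk_before_lt j) hj)
  exact ⟨p, newPiece_eq j ▸ hp, step_spec hp⟩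

def family : Set (Set ℕ) := Piece.carrier '' built

theorem exists_carrier_diff_subset {p : Piece} (hp : p ∈ built) {s : Set ℕ} (hs : s ∈ p.uf) :
    ∃ c ∈ family, c ≠ p.carrier ∧ p.carrier \ c ⊆ s := by
  classical
  obtain ⟨i, hi⟩ := hp
  obtain ⟨j, hij, htask⟩ := exists_lt_task_eq (p.carrier \ s) i
  have hpj : p ∈ before j := ⟨i, hij, hi⟩
  have hS := admissible_before j
  have hfree : ∀ r ∈ before j, task j ∉ r.uf := by
    intro r hr hmem
    rw [htask] at hmem
    by_cases hrp : r = p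
    · subst hrp
      simpa using inter_mem hmem hs
    · exact hS.carrier_notMem r hr p hpj hrp (mem_of_superset hmem sdiff_subset)
  obtain ⟨q, hq, hfresh, hhandles⟩ := exists_newPiece_handles hfree
  rw [htask] at hhandles
  -- a bare branch cannot be almost covered by `p.carrier` and old members, as it is fresh
  have hbase : q.base = p.carrier \ s := hhandles.resolve_right fun ⟨_, B, hB, hfin⟩ =>
    hS.adSet_diff_infinite q.idx hfresh.idx_notMem (insert p.carrier B)
      (by simpa using insert_subset (mem_image_of_mem _ hpj) hB)
      (hfin.subset fun x ⟨hx, hxB⟩ => ⟨hx, by simp_all⟩)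
  refine ⟨q.carrier, mem_image_of_mem _ ⟨j, hq⟩,
    admissible_built.carrier_ne (before_subset_built j hpj) ⟨j, hq⟩ (hfresh.ne hpj),
    fun x ⟨hxp, hxq⟩ => by_contra fun hxs => hxq (Or.inl (hbase ▸ ⟨hxp, hxs⟩))⟩

theorem idealIndependent_family : IdealIndependent family :=
  idealIndependent_of_ultrafilters fun _ ⟨p, hp, hX⟩ => hX ▸
    ⟨p.uf, admissible_built.carrier_mem p hp, admissible_built.le_cofinite p hp,
      fun _ hY hYp => admissible_built.notMem_of_ne_carrier hp hY hYp⟩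

theorem not_idealIndependent_insert_of_mem {Y : Set ℕ} (hY : Y ∉ family) {p : Piece}
    (hp : p ∈ built) (hYp : Y ∈ p.uf) : ¬IdealIndependent (insert Y family) := by
  classical
  obtain ⟨c, hc, hcp, hsub⟩ := exists_carrier_diff_subset hp hYp
  have hpA : p.carrier ∈ family := mem_image_of_mem _ hp
  refine fun hind => hind.2 p.carrier (mem_insert_of_mem _ hpA) {c, Y} ?_ ?_
  · rw [Finset.coe_pair, insert_subset_iff, singleton_subset_iff]
    exact ⟨⟨mem_insert_of_mem _ hc, hcp⟩, mem_insert _ _, fun h => hY (h ▸ hpA)⟩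
  · refine finite_empty.subset fun x ⟨hx, hxcY⟩ => hxcY ?_
    by_cases hxc : x ∈ c
    · exact mem_iUnion₂.2 ⟨c, by simp, hxc⟩
    · exact mem_iUnion₂.2 ⟨Y, by simp, hsub ⟨hx, hxc⟩⟩

theorem not_idealIndependent_insert_of_forall_notMem {Y : Set ℕ} (hY : Y ∉ family)
    (hmem : ∀ p ∈ built, Y ∉ p.uf) : ¬IdealIndependent (insert Y family) := by
  classical
  intro hind
  have hne {c} (hc : c ∈ family) : c ≠ Y := fun h => hY (h ▸ hc)
  obtain ⟨j, hj⟩ := task_surjective Y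
  obtain ⟨p, hp, hfresh, hhandles⟩ :=
    exists_newPiece_handles fun q hq => hj ▸ hmem q (before_subset_built j hq)
  have hpA : p.carrier ∈ family := mem_image_of_mem _ ⟨j, hp⟩
  rw [hj] at hhandles
  rcases hhandles with hbase | ⟨hbase, B, hB, hfin⟩
  · refine hind.2 Y (mem_insert _ _) {p.carrier}
      (by rw [Finset.coe_singleton, singleton_subset_iff]; exact ⟨mem_insert_of_mem _ hpA, hne hpA⟩)
      (finite_empty.subset fun x ⟨hx, hxp⟩ =>
        hxp (mem_iUnion₂.2 ⟨p.carrier, Finset.mem_singleton_self _, Or.inl (hbase ▸ hx)⟩))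
  · refine hind.2 p.carrier (mem_insert_of_mem _ hpA) (insert Y B) ?_ ?_
    · rw [Finset.coe_insert]
      refine insert_subset ⟨mem_insert _ _, (hne hpA).symm⟩ fun Z hZ => ?_
      obtain ⟨q, hq, rfl⟩ := hB hZ
      have hq' := before_subset_built j hq
      exact ⟨mem_insert_of_mem _ (mem_image_of_mem _ hq'),
        admissible_built.carrier_ne ⟨j, hp⟩ hq' (hfresh.ne hq).symm⟩
    · refine hfin.subset fun x ⟨hx, hxB⟩ => ⟨by simpa [Piece.carrier, hbase] using hx, ?_⟩
      simpa [Finset.set_biUnion_insert, or_comm] using hxB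

theorem maximalIdealIndependent_family : MaximalIdealIndependent family := by
  refine .of_not_insert idealIndependent_family fun Y hY => ?_
  by_cases hmem : ∃ p ∈ built, Y ∈ p.uf
  · obtain ⟨p, hp, hYp⟩ := hmem
    exact not_idealIndependent_insert_of_mem hY hp hYp
  · exact not_idealIndependent_insert_of_forall_notMem hY (by simpa using hmem)

theorem coe_uf_eq_complFilter {p : Piece} (hp : p ∈ built) :
    (p.uf : Filter ℕ) = complFilter family p.carrier :=
  le_antisymm
    (ultrafilter_le_complFilter (admissible_built.carrier_mem p hp)
      fun _ hY hYp => admissible_built.notMem_of_ne_carrier hp hY hYp)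
    (complFilter_le_ultrafilter fun _ hs => exists_carrier_diff_subset hp hs)

end ComplementedUltrafilters

/-- There exists a maximal ideal independent family all of whose complemented filters
are ultrafilters. -/
theorem stmt14 : ∃ A : Set (Set ℕ), MaximalIdealIndependent A ∧
    ∀ B ∈ A, ∃ U : Ultrafilter ℕ, (U : Filter ℕ) = complFilter A B := by
  open ComplementedUltrafilters in
  refine ⟨family, maximalIdealIndependent_family, ?_⟩
  rintro _ ⟨p, hp, rfl⟩
  exact ⟨p.uf, coe_uf_eq_complFilter hp⟩
end
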